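/- arXiv:2509.12066 — 4 statements merged into one kernel-verified Lean document; each statement's English description precedes it below -/
import Mathlib

section
/- Let X be a random vector in ℝ^d with X ∈ RV_β(ℝ^d, {b(t)}, μ), and let σ be the angular probability measure on the unit sphere S associated with μ (with respect to a fixed norm ‖·‖), with Θ ∼ σ. Then for every continuous, nonnegative, 1-homogeneous function h : ℝ^d → ℝ₊, one has b(t)·P[h(X) > t] → c_μ·E[h(Θ)^β] as t → ∞, where c_μ := μ({x : ‖x‖ > 1}). -/
/-
Regular variation turns into the scaling law `μ (s • A) = s ^ (-β) μ A` for every `μ`-continuity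
set `A` bounded away from the origin. Only countably many levels of a continuous homogeneous `φ`
can carry `μ`-mass, and the scaling law then forbids any of them from doing so; hence every set
`{φ > r}` is a continuity set and `b(t) P[h(X) > t] → μ {h > 1}`.

To compute `μ {h > 1}`, test the angular convergence against continuous ramps in `h`: this gives
`μ {‖x‖ > 1, h x > u ‖x‖} = c_μ σ {h > u}` for all but countably many `u`. On a cone cell
`{u ‖x‖ < h x ≤ q u ‖x‖}` the set `{h > 1}` lies between `{‖x‖ > 1 / u}` and `{‖x‖ > 1 / (q u)}`,
so by scaling both `μ ({h > 1} ∩ cell)` and `c_μ ∫_{cell} h ^ β dσ` lie between `u ^ β` and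
`(q u) ^ β` times `c_μ σ (cell)`. Summing over a geometric partition `(a q ^ i, a q ^ (i + 1)]`,
`i ∈ ℤ`, of `(0, ∞)` with good endpoints and letting `q ↓ 1` gives `μ {h > 1} = c_μ ∫ h ^ β dσ`.
-/

open MeasureTheory Filter Topology
open scoped Pointwise

noncomputable section

/-- A set in `ℝ^d` is bounded away from the origin. -/
def BddAwayZero {d : ℕ} (A : Set (Fin d → ℝ)) : Prop :=
  ∃ ε > 0, ∀ x ∈ A, ε ≤ ‖x‖

/-- A function `l` is slowly varying at infinity. -/
def SlowlyVarying (l : ℝ → ℝ) : Prop :=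
  ∀ x > 0, Tendsto (fun t => l (t * x) / l t) atTop (nhds 1)

/-- `X ∈ RV(ℝ^d, {b(t)}, μ)`: the random vector `X` is multivariate regularly varying with
normalization `b` and exponent measure `μ`. -/
def IsMRV {Ω : Type*} [MeasurableSpace Ω] (P : Measure Ω) {d : ℕ}
    (X : Ω → Fin d → ℝ) (b : ℝ → ℝ) (μ : Measure (Fin d → ℝ)) : Prop :=
  Tendsto b atTop atTop ∧ μ ≠ 0 ∧ μ {0} = 0 ∧
    (∀ A : Set (Fin d → ℝ), MeasurableSet A → BddAwayZero A → μ A ≠ ⊤) ∧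
    ∀ A : Set (Fin d → ℝ), MeasurableSet A → BddAwayZero A → μ (frontier A) = 0 →
      Tendsto (fun t : ℝ => b t * (P {ω | X ω ∈ t • A}).toReal) atTop (nhds (μ A).toReal)

/-- `X ∈ RV_β(ℝ^d, {b(t)}, μ)`: multivariate regular variation with tail index `β > 0`,
i.e. `b(t) = ℓ(t)·t^β` with `ℓ` slowly varying. -/
def IsMRVIdx {Ω : Type*} [MeasurableSpace Ω] (P : Measure Ω) {d : ℕ}
    (X : Ω → Fin d → ℝ) (β : ℝ) (b : ℝ → ℝ) (μ : Measure (Fin d → ℝ)) : Prop :=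
  IsMRV P X b μ ∧ 0 < β ∧ ∃ l : ℝ → ℝ, SlowlyVarying l ∧ ∀ t > 0, b t = l t * t ^ β

/-- `σ` is the angular (spectral) probability measure of `X`: it is a probability measure on
the unit sphere, and the conditional law of `X/‖X‖` given `‖X‖ > t` converges weakly to `σ`
as `t → ∞`. -/
def IsAngular {Ω : Type*} [MeasurableSpace Ω] (P : Measure Ω) {d : ℕ}
    (X : Ω → Fin d → ℝ) (σ : Measure (Fin d → ℝ)) : Prop :=
  IsProbabilityMeasure σ ∧ (∀ᵐ θ ∂σ, ‖θ‖ = 1) ∧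
    ∀ f : (Fin d → ℝ) → ℝ, Continuous f → (∃ C, ∀ x, |f x| ≤ C) →
      Tendsto (fun t : ℝ =>
          (∫ ω in {ω | t < ‖X ω‖}, f (‖X ω‖⁻¹ • X ω) ∂P) / (P {ω | t < ‖X ω‖}).toReal)
        atTop (nhds (∫ θ, f θ ∂σ))

open Set
open scoped ENNReal

lemma SlowlyVarying.tendsto_div_of_eq_mul_rpow {l b : ℝ → ℝ} {β : ℝ} (hl : SlowlyVarying l)
    (hbl : ∀ t > 0, b t = l t * t ^ β) (hb : ∀ᶠ t in atTop, b t ≠ 0) {s : ℝ} (hs : 0 < s) :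
    Tendsto (fun t => b (t * s) / b t) atTop (𝓝 (s ^ β)) := by
  refine (by simpa using (hl s hs).mul_const (s ^ β) :
    Tendsto (fun t => l (t * s) / l t * s ^ β) atTop (𝓝 (s ^ β))).congr' ?_
  filter_upwards [hb, eventually_gt_atTop 0] with t hbt ht
  have hlt : l t ≠ 0 := by rintro h0; simp [hbl t ht, h0] at hbt
  rw [hbl t ht, hbl (t * s) (mul_pos ht hs), Real.mul_rpow ht.le hs.le]
  field_simp

lemma closure_subset_closure_inter_of_countable_diff {D s : Set ℝ} (hD : (Ioi 0 \ D).Countable)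
    (hs : IsOpen s) (hs0 : s ⊆ Ioi 0) : closure s ⊆ closure (D ∩ s) :=
  calc closure s ⊆ closure (closure (s ∩ (Ioi 0 \ D)ᶜ)) :=
        closure_mono ((hD.dense_compl ℝ).open_subset_closure_inter hs)
    _ = closure (s ∩ (Ioi 0 \ D)ᶜ) := closure_closure
    _ ⊆ closure (D ∩ s) := closure_mono fun _ ⟨hys, hyD⟩ =>
        ⟨by_contra fun hn => hyD ⟨hs0 hys, hn⟩, hys⟩

lemma nhdsWithin_Ioi_neBot_of_countable_diff {D : Set ℝ} (hD : (Ioi 0 \ D).Countable) {x : ℝ}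
    (hx : 0 ≤ x) : (𝓝[D ∩ Ioi x] x).NeBot :=
  mem_closure_iff_nhdsWithin_neBot.1 <| closure_subset_closure_inter_of_countable_diff hD
    isOpen_Ioi (Ioi_subset_Ioi hx) (by rw [closure_Ioi]; exact self_mem_Ici)

lemma nhdsWithin_Ioo_neBot_of_countable_diff {D : Set ℝ} (hD : (Ioi 0 \ D).Countable) {x : ℝ}
    (hx : 0 < x) : (𝓝[D ∩ Ioo 0 x] x).NeBot :=
  mem_closure_iff_nhdsWithin_neBot.1 <| closure_subset_closure_inter_of_countable_diff hD
    isOpen_Ioo (fun _ hy => hy.1) (by rw [closure_Ioo hx.ne]; exact right_mem_Icc.2 hx.le)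

lemma nonpos_of_forall_le_sub_of_countable_diff {D : Set ℝ} (hD : (Ioi 0 \ D).Countable)
    {ψ : ℝ → ℝ} {r m : ℝ} (hr : 0 < r) (hψ : ContinuousAt ψ r)
    (hm : ∀ s ∈ D ∩ Ioo 0 r, ∀ s' ∈ D ∩ Ioi r, m ≤ ψ s - ψ s') : m ≤ 0 := by
  have := nhdsWithin_Ioo_neBot_of_countable_diff hD hr
  have := nhdsWithin_Ioi_neBot_of_countable_diff hD hr.le
  have hψ' := fun s : Set ℝ => hψ.tendsto.mono_left (nhdsWithin_le_nhds (s := s))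
  have h1 : ∀ s' ∈ D ∩ Ioi r, m ≤ ψ r - ψ s' := fun s' hs' =>
    ge_of_tendsto ((hψ' _).sub_const _) (eventually_nhdsWithin_of_forall fun s hs => hm s hs s' hs')
  simpa using ge_of_tendsto ((hψ' _).const_sub (ψ r)) (eventually_nhdsWithin_of_forall h1)

lemma exists_pos_forall_mul_zpow_mem {U : Set ℝ} (hU : (Ioi 0 \ U).Countable) {q : ℝ}
    (hq : 0 < q) : ∃ a > 0, ∀ i : ℤ, a * q ^ i ∈ U := by
  set B := ⋃ i : ℤ, (fun y => y / q ^ i) '' (Ioi 0 \ U)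
  have hB : (Ioi 0 \ Bᶜ).Countable :=
    (countable_iUnion fun i => hU.image _).mono fun y hy => by_contra fun h => hy.2 h
  obtain ⟨a, haB, ha⟩ :=
    (nhdsWithin_Ioi_neBot_of_countable_diff hB le_rfl).nonempty_of_mem self_mem_nhdsWithin
  refine ⟨a, ha, fun i => by_contra fun hi => haB (mem_iUnion.2 ⟨i, a * q ^ i,
    ⟨mul_pos ha (zpow_pos hq i), hi⟩, mul_div_cancel_right₀ _ (zpow_pos hq i).ne'⟩)⟩

lemma measure_Ioi_zero_le_of_forall_Ioc {ν₁ ν₂ : Measure ℝ} {U : Set ℝ}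
    (hU : (Ioi 0 \ U).Countable) {q : ℝ} (hq : 1 < q) {K : ℝ≥0∞}
    (h : ∀ u ∈ U, 0 < u → q * u ∈ U → ν₁ (Ioc u (q * u)) ≤ K * ν₂ (Ioc u (q * u))) :
    ν₁ (Ioi 0) ≤ K * ν₂ (Ioi 0) := by
  have hq0 : 0 < q := zero_lt_one.trans hq
  obtain ⟨a, ha, haU⟩ := exists_pos_forall_mul_zpow_mem hU hq0
  set I : ℤ → Set ℝ := fun i => Ioc (a * q ^ i) (a * q ^ (i + 1))
  have hmono : Monotone fun i : ℤ => a * q ^ i := fun i j hij =>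
    mul_le_mul_of_nonneg_left (zpow_le_zpow_right₀ hq.le hij) ha.le
  have hdisj : Pairwise (Function.onFun Disjoint I) := by
    simpa only [Order.succ_eq_add_one] using hmono.pairwise_disjoint_on_Ioc_succ
  have hcover : ⋃ i, I i = Ioi 0 := by
    refine Subset.antisymm (iUnion_subset fun i x hx => (mul_pos ha (zpow_pos hq0 i)).trans hx.1)
      fun x (hx : 0 < x) => ?_
    obtain ⟨i, hi⟩ := exists_mem_Ioc_zpow (div_pos hx ha) hq
    exact mem_iUnion.2 ⟨i, (lt_div_iff₀' ha).1 hi.1, (div_le_iff₀' ha).1 hi.2⟩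
  rw [← hcover, measure_iUnion hdisj fun _ => measurableSet_Ioc,
    measure_iUnion hdisj fun _ => measurableSet_Ioc, ← ENNReal.tsum_mul_left]
  refine ENNReal.tsum_le_tsum fun i => ?_
  have hqi : q * (a * q ^ i) = a * q ^ (i + 1) := by rw [zpow_add_one₀ hq0.ne']; ring
  simpa only [I, hqi] using h _ (haU i) (mul_pos ha (zpow_pos hq0 i)) (hqi ▸ haU (i + 1))

lemma ENNReal.le_of_forall_one_lt_le_ofReal_rpow_mul {a b : ℝ≥0∞} {β : ℝ}
    (h : ∀ q : ℝ, 1 < q → a ≤ ENNReal.ofReal (q ^ β) * b) : a ≤ b := by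
  have hlim : Tendsto (fun q : ℝ => ENNReal.ofReal (q ^ β) * b) (𝓝[>] 1) (𝓝 b) := by
    have := ((ENNReal.continuous_ofReal.tendsto _).comp
      ((Real.continuousAt_rpow_const 1 β (Or.inl one_ne_zero)).tendsto)).mono_left
      (nhdsWithin_le_nhds (s := Ioi 1))
    simpa using ENNReal.Tendsto.mul_const this (Or.inl (by simp))
  exact ge_of_tendsto hlim (eventually_nhdsWithin_of_forall h)

lemma exists_continuous_ramp {a c : ℝ} (hac : a < c) :
    ∃ ρ : ℝ → ℝ, Continuous ρ ∧ (∀ y, 0 ≤ ρ y) ∧ (∀ y, ρ y ≤ 1) ∧ (∀ y, c ≤ y → ρ y = 1) ∧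
      ∀ y, 0 < ρ y → a < y := by
  refine ⟨fun y => max 0 (min 1 ((y - a) / (c - a))), by fun_prop, fun y => le_max_left _ _,
    fun y => max_le zero_le_one (min_le_left _ _), fun y hy => ?_, fun y hy => ?_⟩
  · change max 0 (min 1 ((y - a) / (c - a))) = 1
    rw [min_eq_left ((one_le_div (sub_pos.2 hac)).2 (by linarith)), max_eq_right zero_le_one]
  · by_contra hya
    have : (y - a) / (c - a) ≤ 0 := div_nonpos_of_nonpos_of_nonneg (by linarith) (by linarith)
    simp [min_eq_right (this.trans zero_le_one), max_eq_left this] at hy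

section RestrictedIntegral

variable {Ω : Type*} [MeasurableSpace Ω] {P : Measure Ω} [IsFiniteMeasure P] {A : Set Ω}
  {f : Ω → ℝ}

lemma measureReal_le_setIntegral (hf : Integrable f (P.restrict A)) (h0 : ∀ ω, 0 ≤ f ω)
    {S : Set Ω} (hSA : S ⊆ A) (h1 : ∀ ω ∈ S, 1 ≤ f ω) : P.real S ≤ ∫ ω in A, f ω ∂P :=
  calc P.real S ≤ (P.restrict A).real {ω | 1 ≤ f ω} :=
        ENNReal.toReal_mono (measure_ne_top _ _) <| (measure_mono fun ω hω =>
          (⟨h1 ω hω, hSA hω⟩ : ω ∈ {ω | 1 ≤ f ω} ∩ A)).trans (Measure.le_restrict_apply _ _)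
    _ ≤ ∫ ω in A, f ω ∂P := by
        simpa using mul_meas_ge_le_integral_of_nonneg (ae_of_all _ h0) hf 1

/-- `A` need not be measurable: the integrand is replaced by a measurable modification, which
agrees with it on `A` up to a `P`-null set. -/
lemma setIntegral_le_measureReal (hf : Integrable f (P.restrict A)) (h1 : ∀ ω, f ω ≤ 1)
    {S : Set Ω} (hS : ∀ ω ∈ A, 0 < f ω → ω ∈ S) : ∫ ω in A, f ω ∂P ≤ P.real S := by
  set g := hf.aestronglyMeasurable.mk f
  have hfg : f =ᵐ[P.restrict A] g := hf.aestronglyMeasurable.ae_eq_mk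
  have hM : MeasurableSet {ω | 0 < g ω} :=
    measurableSet_lt measurable_const hf.aestronglyMeasurable.stronglyMeasurable_mk.measurable
  have hnull : P ({ω | f ω ≠ g ω} ∩ A) = 0 :=
    nonpos_iff_eq_zero.1 ((Measure.le_restrict_apply _ _).trans (ae_iff.1 hfg).le)
  calc ∫ ω in A, f ω ∂P ≤ ∫ ω in A, {ω | 0 < g ω}.indicator 1 ω ∂P := by
        refine integral_mono_ae hf ((integrable_const 1).indicator hM) ?_
        filter_upwards [hfg] with ω hω
        by_cases hg : 0 < g ω
        · simpa [indicator_of_mem (show ω ∈ {ω | 0 < g ω} from hg)] using h1 ω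
        · simpa [indicator_of_notMem (show ω ∉ {ω | 0 < g ω} from hg), hω] using hg
    _ = P.real ({ω | 0 < g ω} ∩ A) := by
        rw [integral_indicator_one hM, measureReal_restrict_apply hM]
    _ ≤ P.real S := by
        refine ENNReal.toReal_mono (measure_ne_top _ _) ?_
        calc P ({ω | 0 < g ω} ∩ A) ≤ P (S ∪ ({ω | f ω ≠ g ω} ∩ A)) := measure_mono ?_
          _ ≤ P S := by simpa [hnull] using measure_union_le (μ := P) S ({ω | f ω ≠ g ω} ∩ A)
        rintro ω ⟨hg, hA⟩
        by_cases hω : f ω = g ω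
        · exact Or.inl (hS ω hA (by rwa [hω]))
        · exact Or.inr ⟨hω, hA⟩

end RestrictedIntegral

lemma setLIntegral_ofReal_rpow_preimage_Ioc_bounds {α : Type*} [MeasurableSpace α] {σ : Measure α}
    {h : α → ℝ} (hh : Measurable h) {β u v : ℝ} (hu : 0 ≤ u) (hβ : 0 ≤ β) :
    ENNReal.ofReal (u ^ β) * σ (h ⁻¹' Ioc u v)
        ≤ ∫⁻ θ in h ⁻¹' Ioc u v, ENNReal.ofReal (h θ ^ β) ∂σ ∧
      ∫⁻ θ in h ⁻¹' Ioc u v, ENNReal.ofReal (h θ ^ β) ∂σ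
        ≤ ENNReal.ofReal (v ^ β) * σ (h ⁻¹' Ioc u v) := by
  rw [← setLIntegral_const, ← setLIntegral_const]
  exact ⟨setLIntegral_mono (by fun_prop) fun θ hθ =>
      ENNReal.ofReal_le_ofReal (Real.rpow_le_rpow hu hθ.1.le hβ),
    setLIntegral_mono measurable_const fun θ hθ =>
      ENNReal.ofReal_le_ofReal (Real.rpow_le_rpow (hu.trans hθ.1.le) hθ.2 hβ)⟩

section Homogeneous

variable {E : Type*} [AddCommGroup E] [Module ℝ E] {φ ψ : E → ℝ}

lemma homogeneous_zero (hφ : ∀ c : ℝ, 0 < c → ∀ x, φ (c • x) = c * φ x) : φ 0 = 0 := by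
  have := hφ 2 two_pos 0
  rw [smul_zero] at this
  linarith

lemma smul_setOf_lt_const_of_homogeneous (hφ : ∀ c : ℝ, 0 < c → ∀ x, φ (c • x) = c * φ x)
    {c : ℝ} (hc : 0 < c) (r : ℝ) : c • {x | r < φ x} = {x | c * r < φ x} := by
  ext x
  rw [mem_smul_set_iff_inv_smul_mem₀ hc.ne', mem_ofPred_eq, mem_ofPred_eq, hφ _ (inv_pos.2 hc),
    ← mul_lt_mul_iff_right₀ hc, mul_inv_cancel_left₀ hc.ne']

lemma smul_setOf_lt_of_homogeneous (hφ : ∀ c : ℝ, 0 < c → ∀ x, φ (c • x) = c * φ x)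
    (hψ : ∀ c : ℝ, 0 < c → ∀ x, ψ (c • x) = c * ψ x) {c : ℝ} (hc : 0 < c) :
    c • {x | ψ x < φ x} = {x | ψ x < φ x} := by
  ext x
  rw [mem_smul_set_iff_inv_smul_mem₀ hc.ne', mem_ofPred_eq, mem_ofPred_eq, hφ _ (inv_pos.2 hc),
    hψ _ (inv_pos.2 hc), mul_lt_mul_iff_right₀ (inv_pos.2 hc)]

end Homogeneous

section NormedHomogeneous

variable {E : Type*} [NormedAddCommGroup E] {φ h : E → ℝ}

lemma norm_smul_of_pos [NormedSpace ℝ E] {c : ℝ} (hc : 0 < c) (x : E) : ‖c • x‖ = c * ‖x‖ := by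
  rw [norm_smul, Real.norm_of_nonneg hc.le]

lemma exists_le_mul_norm_of_homogeneous [NormedSpace ℝ E] (hφ : Continuous φ)
    (hhom : ∀ c : ℝ, 0 < c → ∀ x, φ (c • x) = c * φ x) : ∃ C > 0, ∀ x, φ x ≤ C * ‖x‖ := by
  obtain ⟨δ, hδ, hδφ⟩ := Metric.continuousAt_iff.1 hφ.continuousAt 1 one_pos
  refine ⟨2 / δ, by positivity, fun x => ?_⟩
  rcases eq_or_ne x 0 with rfl | hx
  · simp [homogeneous_zero hhom]
  have hxn := norm_pos_iff.2 hx
  set c := δ / (2 * ‖x‖)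
  have hc : 0 < c := by positivity
  have hcx : dist (c • x) 0 < δ := by
    rw [dist_zero_right, norm_smul_of_pos hc]
    calc c * ‖x‖ = δ / 2 := by simp only [c]; field_simp
      _ < δ := half_lt_self hδ
  have h1 := (abs_lt.1 (hδφ hcx)).2
  rw [hhom c hc, homogeneous_zero hhom, sub_zero] at h1
  calc φ x = c⁻¹ * (c * φ x) := by field_simp
    _ ≤ c⁻¹ * 1 := by gcongr
    _ = 2 / δ * ‖x‖ := by simp only [c]; field_simp

lemma norm_pos_of_homogeneous_ne_zero [NormedSpace ℝ E]
    (hhom : ∀ c : ℝ, 0 < c → ∀ x, φ (c • x) = c * φ x) {x : E} (hx : φ x ≠ 0) : 0 < ‖x‖ :=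
  norm_pos_iff.2 fun h0 => hx (h0 ▸ homogeneous_zero hhom)

lemma lt_apply_inv_norm_smul_iff [NormedSpace ℝ E]
    (hhom : ∀ c : ℝ, 0 < c → ∀ x, φ (c • x) = c * φ x) {y : E} (hy : 0 < ‖y‖) {v : ℝ} :
    v < φ (‖y‖⁻¹ • y) ↔ v * ‖y‖ < φ y := by
  rw [hhom _ (inv_pos.2 hy), inv_mul_eq_div, lt_div_iff₀ hy]

lemma iUnion_one_div_lt_norm : ⋃ n : ℕ, {x : E | 1 / ((n : ℝ) + 1) < ‖x‖} = {0}ᶜ := by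
  ext x
  simp only [mem_iUnion, mem_ofPred_eq, mem_compl_iff, mem_singleton_iff, ← norm_pos_iff]
  exact ⟨fun ⟨n, hn⟩ => (Nat.one_div_pos_of_nat).trans hn, exists_nat_one_div_lt⟩

/-- For homogeneous `h`, the points `x ≠ 0` whose direction `x / ‖x‖` satisfies `v < h`. -/
def cone (h : E → ℝ) (v : ℝ) : Set E := {x | v * ‖x‖ < h x}

lemma cone_subset_cone {v w : ℝ} (hvw : v ≤ w) : cone h w ⊆ cone h v :=
  fun x (hx : w * ‖x‖ < h x) => (mul_le_mul_of_nonneg_right hvw (norm_nonneg x)).trans_lt hx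

lemma smul_cone [NormedSpace ℝ E] (hhom : ∀ c : ℝ, 0 < c → ∀ x, h (c • x) = c * h x) (v : ℝ)
    {c : ℝ} (hc : 0 < c) : c • cone h v = cone h v :=
  smul_setOf_lt_of_homogeneous hhom (fun c hc x => by rw [norm_smul_of_pos hc, mul_left_comm]) hc

lemma measurableSet_cone [MeasurableSpace E] [OpensMeasurableSpace E] (hh : Measurable h)
    (v : ℝ) : MeasurableSet (cone h v) :=
  measurableSet_lt (measurable_const.mul measurable_norm) hh

lemma frontier_cone_subset (hh : Continuous h) (v : ℝ) :
    frontier (cone h v) ⊆ {x | v * ‖x‖ = h x} :=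
  frontier_lt_subset_eq (continuous_const.mul continuous_norm) hh

lemma setOf_one_lt_inter_preimage_div_norm [NormedSpace ℝ E]
    (hhom : ∀ c : ℝ, 0 < c → ∀ x, h (c • x) = c * h x) (u v : ℝ) :
    {x | 1 < h x} ∩ (fun x => h x / ‖x‖) ⁻¹' Ioc u v = {x | 1 < h x} ∩ (cone h u \ cone h v) := by
  ext x
  refine and_congr_right fun (hx : 1 < h x) => ?_
  have hx0 := norm_pos_of_homogeneous_ne_zero hhom (zero_lt_one.trans hx).ne'
  simp only [cone, mem_preimage, mem_Ioc, Set.mem_sdiff, mem_ofPred_eq, not_lt,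
    lt_div_iff₀ hx0, div_le_iff₀ hx0]

end NormedHomogeneous

lemma BddAwayZero.mono {d : ℕ} {A B : Set (Fin d → ℝ)} (hB : BddAwayZero B) (hAB : A ⊆ B) :
    BddAwayZero A :=
  let ⟨ε, hε, hεB⟩ := hB
  ⟨ε, hε, fun x hx => hεB x (hAB hx)⟩

lemma bddAwayZero_setOf_lt {d : ℕ} {φ : (Fin d → ℝ) → ℝ} (hφ : Continuous φ)
    (hhom : ∀ c : ℝ, 0 < c → ∀ x, φ (c • x) = c * φ x) {r : ℝ} (hr : 0 < r) :
    BddAwayZero {x | r < φ x} :=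
  let ⟨C, hC, hφC⟩ := exists_le_mul_norm_of_homogeneous hφ hhom
  ⟨r / C, div_pos hr hC, fun x hx => by
    rw [div_le_iff₀ hC, mul_comm]; exact (lt_of_lt_of_le hx (hφC x)).le⟩

namespace IsMRVIdx

variable {Ω : Type*} [MeasurableSpace Ω] {P : Measure Ω} {d : ℕ} {X : Ω → Fin d → ℝ} {β : ℝ}
  {b : ℝ → ℝ} {μ : Measure (Fin d → ℝ)} {φ h : (Fin d → ℝ) → ℝ}

lemma pos (hX : IsMRVIdx P X β b μ) : 0 < β := hX.2.1

lemma eventually_pos (hX : IsMRVIdx P X β b μ) : ∀ᶠ t in atTop, 0 < b t :=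
  hX.1.1.eventually_gt_atTop 0

lemma measure_zero (hX : IsMRVIdx P X β b μ) : μ {0} = 0 := hX.1.2.2.1

lemma measure_ne_top (hX : IsMRVIdx P X β b μ) {A : Set (Fin d → ℝ)} (hA : MeasurableSet A)
    (hAb : BddAwayZero A) : μ A ≠ ∞ :=
  hX.1.2.2.2.1 A hA hAb

lemma measure_norm_gt_ne_top (hX : IsMRVIdx P X β b μ) {r : ℝ} (hr : 0 < r) :
    μ {x | r < ‖x‖} ≠ ∞ :=
  hX.measure_ne_top (measurableSet_lt measurable_const measurable_norm) ⟨r, hr, fun _ hx => hx.le⟩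

lemma tendsto (hX : IsMRVIdx P X β b μ) {A : Set (Fin d → ℝ)} (hA : MeasurableSet A)
    (hAb : BddAwayZero A) (hAf : μ (frontier A) = 0) :
    Tendsto (fun t : ℝ => b t * (P {ω | X ω ∈ t • A}).toReal) atTop (𝓝 (μ A).toReal) :=
  hX.1.2.2.2.2 A hA hAb hAf

lemma tendsto_div (hX : IsMRVIdx P X β b μ) {s : ℝ} (hs : 0 < s) :
    Tendsto (fun t => b (t * s) / b t) atTop (𝓝 (s ^ β)) :=
  let ⟨_, hl, hbl⟩ := hX.2.2
  hl.tendsto_div_of_eq_mul_rpow hbl (hX.eventually_pos.mono fun _ h => h.ne') hs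

lemma sigmaFinite (hX : IsMRVIdx P X β b μ) : SigmaFinite μ := by
  refine ⟨⟨{ set := fun n => {0} ∪ {x | 1 / ((n : ℝ) + 1) < ‖x‖}
             set_mem := fun _ => trivial
             finite := fun n => ?_
             spanning := ?_ }⟩⟩
  · refine (measure_union_le _ _).trans_lt ?_
    rw [hX.measure_zero, zero_add]
    exact (hX.measure_norm_gt_ne_top Nat.one_div_pos_of_nat).lt_top
  · rw [← union_iUnion, iUnion_one_div_lt_norm, union_compl_self]

lemma measure_smul (hX : IsMRVIdx P X β b μ) {A : Set (Fin d → ℝ)} (hA : MeasurableSet A)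
    (hAb : BddAwayZero A) (hAf : μ (frontier A) = 0) {s : ℝ} (hs : 0 < s)
    (hsf : μ (frontier (s • A)) = 0) : μ.real (s • A) = s ^ (-β) * μ.real A := by
  obtain ⟨ε, hε, hεA⟩ := hAb
  have hsAb : BddAwayZero (s • A) := ⟨s * ε, mul_pos hs hε, by
    rintro _ ⟨y, hy, rfl⟩
    rw [norm_smul_of_pos hs]
    exact mul_le_mul_of_nonneg_left (hεA y hy) hs.le⟩
  have hts : Tendsto (fun t : ℝ => t * s) atTop atTop := tendsto_id.atTop_mul_const hs
  have hratio : Tendsto (fun t => b t / b (t * s)) atTop (𝓝 (s ^ (-β))) := by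
    rw [Real.rpow_neg hs.le]
    simpa only [inv_div] using (hX.tendsto_div hs).inv₀ (Real.rpow_pos_of_pos hs β).ne'
  have hlim := hratio.mul ((hX.tendsto hA ⟨ε, hε, hεA⟩ hAf).comp hts)
  refine tendsto_nhds_unique (hX.tendsto (hA.const_smul₀ s) hsAb hsf) (hlim.congr' ?_)
  filter_upwards [hts.eventually hX.eventually_pos] with t hbt
  simp only [Function.comp, mul_smul]
  field_simp

lemma measure_level_eq_zero (hX : IsMRVIdx P X β b μ) (hφ : Continuous φ)
    (hhom : ∀ c : ℝ, 0 < c → ∀ x, φ (c • x) = c * φ x) {r : ℝ} (hr : 0 < r) :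
    μ {x | φ x = r} = 0 := by
  have := hX.sigmaFinite
  set S : ℝ → Set (Fin d → ℝ) := fun r => {x | r < φ x}
  have hSm : ∀ r, MeasurableSet (S r) := fun r => measurableSet_lt measurable_const hφ.measurable
  have hSf : ∀ s > 0, μ (S s) ≠ ∞ := fun s hs =>
    hX.measure_ne_top (hSm s) (bddAwayZero_setOf_lt hφ hhom hs)
  set D := {r | μ {x | φ x = r} = 0}
  have hD : (Ioi 0 \ D).Countable :=
    (Measure.countable_meas_level_set_pos hφ.measurable).mono fun r hr => pos_iff_ne_zero.2 hr.2
  have hSfr : ∀ r ∈ D, μ (frontier (S r)) = 0 := fun r hr =>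
    measure_mono_null ((frontier_lt_subset_eq continuous_const hφ).trans fun x hx => hx.symm) hr
  obtain ⟨r₀, hr₀D, hr₀⟩ : (D ∩ Ioi 0).Nonempty :=
    (nhdsWithin_Ioi_neBot_of_countable_diff hD le_rfl).nonempty_of_mem self_mem_nhdsWithin
  set ψ : ℝ → ℝ := fun s => (s / r₀) ^ (-β) * μ.real (S r₀)
  have hψ : ∀ s ∈ D ∩ Ioi 0, μ.real (S s) = ψ s := by
    rintro s ⟨hsD, hs⟩
    have hsmul : (s / r₀) • S r₀ = S s := by
      rw [smul_setOf_lt_const_of_homogeneous hhom (div_pos hs hr₀), div_mul_cancel₀ _ hr₀.ne']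
    rw [← hsmul]
    exact hX.measure_smul (hSm r₀) (bddAwayZero_setOf_lt hφ hhom hr₀) (hSfr r₀ hr₀D)
      (div_pos hs hr₀) (hsmul ▸ hSfr s hsD)
  have hψc : ContinuousAt ψ r :=
    ((continuousAt_id.div_const r₀).rpow_const (Or.inl (div_pos hr hr₀).ne')).mul_const _
  have hle : μ.real {x | φ x = r} ≤ 0 := by
    refine nonpos_of_forall_le_sub_of_countable_diff hD hr hψc
      fun s ⟨hsD, hs0, hsr⟩ s' ⟨hs'D, hrs'⟩ => ?_
    rw [← hψ s ⟨hsD, hs0⟩, ← hψ s' ⟨hs'D, hr.trans hrs'⟩, ← measureReal_sdiff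
      (show S s' ⊆ S s from fun x hx => (hsr.trans hrs').trans hx) (hSm s') (hSf s hs0)]
    exact measureReal_mono (fun x (hx : φ x = r) => ⟨show s < φ x from hx ▸ hsr,
      fun (h : s' < φ x) => lt_asymm hrs' (hx ▸ h)⟩)
      (measure_ne_top_of_subset sdiff_subset (hSf s hs0))
  have hsub : {x | φ x = r} ⊆ S (r / 2) := fun x (hx : φ x = r) =>
    show r / 2 < φ x by rw [hx]; exact half_lt_self hr
  exact (measureReal_eq_zero_iff (measure_ne_top_of_subset hsub (hSf _ (half_pos hr)))).1
    (hle.antisymm measureReal_nonneg)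

lemma measure_frontier_gt_inter (hX : IsMRVIdx P X β b μ) (hφ : Continuous φ)
    (hhom : ∀ c : ℝ, 0 < c → ∀ x, φ (c • x) = c * φ x) {K : Set (Fin d → ℝ)}
    (hKf : μ (frontier K) = 0) {r : ℝ} (hr : 0 < r) :
    μ (frontier ({x | r < φ x} ∩ K)) = 0 := by
  refine measure_mono_null ((frontier_inter_subset _ _).trans
    (union_subset_union inter_subset_left inter_subset_right)) (measure_union_null ?_ hKf)
  exact measure_mono_null ((frontier_lt_subset_eq continuous_const hφ).trans fun x hx => hx.symm)
    (hX.measure_level_eq_zero hφ hhom hr)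

lemma measure_gt_inter_of_smul_eq (hX : IsMRVIdx P X β b μ) (hφ : Continuous φ)
    (hhom : ∀ c : ℝ, 0 < c → ∀ x, φ (c • x) = c * φ x) {K : Set (Fin d → ℝ)}
    (hK : MeasurableSet K) (hKc : ∀ c : ℝ, 0 < c → c • K = K) (hKf : μ (frontier K) = 0)
    {r : ℝ} (hr : 0 < r) :
    μ ({x | r < φ x} ∩ K) = ENNReal.ofReal (r ^ (-β)) * μ ({x | 1 < φ x} ∩ K) := by
  have hm : ∀ s, MeasurableSet ({x | s < φ x} ∩ K) := fun s =>
    (measurableSet_lt measurable_const hφ.measurable).inter hK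
  have hb : ∀ s > 0, BddAwayZero ({x | s < φ x} ∩ K) := fun s hs =>
    (bddAwayZero_setOf_lt hφ hhom hs).mono inter_subset_left
  have hsmul : r • ({x | 1 < φ x} ∩ K) = {x | r < φ x} ∩ K := by
    rw [smul_set_inter₀ hr.ne', smul_setOf_lt_const_of_homogeneous hhom hr, mul_one, hKc r hr]
  have := hX.measure_smul (hm 1) (hb 1 one_pos)
    (hX.measure_frontier_gt_inter hφ hhom hKf one_pos) hr
    (hsmul ▸ hX.measure_frontier_gt_inter hφ hhom hKf hr)
  rw [hsmul] at this
  rw [← ofReal_measureReal (hX.measure_ne_top (hm r) (hb r hr)), this,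
    ENNReal.ofReal_mul (Real.rpow_nonneg hr.le _),
    ofReal_measureReal (hX.measure_ne_top (hm 1) (hb 1 one_pos))]

lemma tendsto_gt_inter_of_smul_eq (hX : IsMRVIdx P X β b μ) (hφ : Continuous φ)
    (hhom : ∀ c : ℝ, 0 < c → ∀ x, φ (c • x) = c * φ x) {K : Set (Fin d → ℝ)}
    (hK : MeasurableSet K) (hKc : ∀ c : ℝ, 0 < c → c • K = K) (hKf : μ (frontier K) = 0) :
    Tendsto (fun t : ℝ => b t * (P {ω | t < φ (X ω) ∧ X ω ∈ K}).toReal) atTop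
      (𝓝 (μ.real ({x | 1 < φ x} ∩ K))) := by
  refine (hX.tendsto ((measurableSet_lt measurable_const hφ.measurable).inter hK)
    ((bddAwayZero_setOf_lt hφ hhom one_pos).mono inter_subset_left)
    (hX.measure_frontier_gt_inter hφ hhom hKf one_pos)).congr' ?_
  filter_upwards [eventually_gt_atTop 0] with t ht
  rw [smul_set_inter₀ ht.ne', smul_setOf_lt_const_of_homogeneous hhom ht, mul_one, hKc t ht]
  rfl

lemma tendsto_gt (hX : IsMRVIdx P X β b μ) (hφ : Continuous φ)
    (hhom : ∀ c : ℝ, 0 < c → ∀ x, φ (c • x) = c * φ x) :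
    Tendsto (fun t : ℝ => b t * (P {ω | t < φ (X ω)}).toReal) atTop
      (𝓝 (μ.real {x | 1 < φ x})) := by
  simpa using hX.tendsto_gt_inter_of_smul_eq hφ hhom MeasurableSet.univ
    (fun c hc => smul_set_univ₀ hc.ne') (by simp)

lemma tendsto_norm_gt (hX : IsMRVIdx P X β b μ) :
    Tendsto (fun t : ℝ => b t * (P {ω | t < ‖X ω‖}).toReal) atTop
      (𝓝 (μ.real {x | 1 < ‖x‖})) :=
  hX.tendsto_gt continuous_norm fun _ hc x => norm_smul_of_pos hc x

lemma tendsto_norm_gt_inter_cone (hX : IsMRVIdx P X β b μ) (hh : Continuous h)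
    (hhom : ∀ c : ℝ, 0 < c → ∀ x, h (c • x) = c * h x) {v : ℝ}
    (hv : μ {x | v * ‖x‖ = h x} = 0) :
    Tendsto (fun t : ℝ => b t * (P {ω | t < ‖X ω‖ ∧ X ω ∈ cone h v}).toReal) atTop
      (𝓝 (μ.real ({x | 1 < ‖x‖} ∩ cone h v))) :=
  hX.tendsto_gt_inter_of_smul_eq continuous_norm (fun _ hc x => norm_smul_of_pos hc x)
    (measurableSet_cone hh.measurable v) (fun _ hc => smul_cone hhom v hc)
    (measure_mono_null (frontier_cone_subset hh v) hv)

lemma measure_norm_gt_one_ne_zero (hX : IsMRVIdx P X β b μ) : μ {x | 1 < ‖x‖} ≠ 0 := by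
  intro h0
  have hr : ∀ n : ℕ, μ {x : Fin d → ℝ | 1 / ((n : ℝ) + 1) < ‖x‖} = 0 := fun n => by
    simpa [h0] using hX.measure_gt_inter_of_smul_eq continuous_norm
      (fun c hc x => norm_smul_of_pos hc x) MeasurableSet.univ
      (fun c hc => smul_set_univ₀ hc.ne') (by simp) (Nat.one_div_pos_of_nat (n := n))
  refine hX.1.2.1 (Measure.measure_univ_eq_zero.1 (measure_mono_null (fun x _ => ?_)
    (measure_union_null hX.measure_zero (measure_iUnion_null hr))))
  rw [union_comm, iUnion_one_div_lt_norm, compl_union_self]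
  trivial

lemma measureReal_norm_gt_one_pos (hX : IsMRVIdx P X β b μ) : 0 < μ.real {x | 1 < ‖x‖} :=
  ENNReal.toReal_pos hX.measure_norm_gt_one_ne_zero (hX.measure_norm_gt_ne_top one_pos)

lemma countable_not_measure_cone_level_eq_zero (hX : IsMRVIdx P X β b μ) (hh : Measurable h) :
    (Ioi 0 \ {v | μ {x | v * ‖x‖ = h x} = 0}).Countable := by
  have := hX.sigmaFinite
  refine (Measure.countable_meas_level_set_pos (μ := μ) (g := fun x => h x / ‖x‖)
    (hh.div measurable_norm)).mono ?_
  rintro v ⟨-, hv⟩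
  refine pos_iff_ne_zero.2 fun (h0 : μ {x | h x / ‖x‖ = v} = 0) => hv ?_
  refine measure_mono_null (fun x (hx : v * ‖x‖ = h x) => ?_)
    (measure_union_null h0 hX.measure_zero)
  rcases eq_or_ne x 0 with rfl | hx0
  · exact Or.inr rfl
  · exact Or.inl (show h x / ‖x‖ = v by
      rw [← hx, mul_div_cancel_right₀ _ (norm_ne_zero_iff.2 hx0)])

lemma measure_gt_one_inter_cell_bounds (hX : IsMRVIdx P X β b μ) (hh : Continuous h)
    (hhom : ∀ c : ℝ, 0 < c → ∀ x, h (c • x) = c * h x) {u v : ℝ} (hu : 0 < u) (huv : u ≤ v)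
    (hu0 : μ {x | u * ‖x‖ = h x} = 0) (hv0 : μ {x | v * ‖x‖ = h x} = 0) :
    ENNReal.ofReal (u ^ β) * μ ({x | 1 < ‖x‖} ∩ (cone h u \ cone h v))
        ≤ μ ({x | 1 < h x} ∩ (cone h u \ cone h v)) ∧
      μ ({x | 1 < h x} ∩ (cone h u \ cone h v))
        ≤ ENNReal.ofReal (v ^ β) * μ ({x | 1 < ‖x‖} ∩ (cone h u \ cone h v)) := by
  have hv := hu.trans_le huv
  have hscale : ∀ r > 0, μ ({x | r < ‖x‖} ∩ (cone h u \ cone h v)) =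
      ENNReal.ofReal (r ^ (-β)) * μ ({x | 1 < ‖x‖} ∩ (cone h u \ cone h v)) := by
    refine fun r hr => hX.measure_gt_inter_of_smul_eq continuous_norm
      (fun _ hc x => norm_smul_of_pos hc x)
      ((measurableSet_cone hh.measurable u).diff (measurableSet_cone hh.measurable v))
      (fun c hc => ?_) ?_ hr
    · rw [smul_set_sdiff₀ hc.ne', smul_cone hhom u hc, smul_cone hhom v hc]
    · refine measure_mono_null ?_ (measure_union_null (measure_mono_null
        (frontier_cone_subset hh u) hu0) (measure_mono_null (frontier_cone_subset hh v) hv0))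
      rw [sdiff_eq, ← frontier_compl (cone h v)]
      exact (frontier_inter_subset _ _).trans
        (union_subset_union inter_subset_left inter_subset_right)
  have hinv : ∀ w : ℝ, 0 < w → w ^ β = w⁻¹ ^ (-β) := fun w hw => by
    rw [Real.inv_rpow hw.le, Real.rpow_neg hw.le, inv_inv]
  rw [hinv u hu, hinv v hv, ← hscale _ (inv_pos.2 hu), ← hscale _ (inv_pos.2 hv)]
  constructor
  · refine measure_mono fun x ⟨(hx : u⁻¹ < ‖x‖), (hxu : u * ‖x‖ < h x), hxv⟩ => ⟨?_, hxu, hxv⟩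
    rw [inv_lt_iff_one_lt_mul₀' hu] at hx
    exact hx.trans hxu
  · refine measure_mono fun x ⟨(hx : 1 < h x), hxu, (hxv : ¬v * ‖x‖ < h x)⟩ => ⟨?_, hxu, hxv⟩
    show v⁻¹ < ‖x‖
    rw [inv_lt_iff_one_lt_mul₀' hv]
    exact hx.trans_le (not_lt.1 hxv)

end IsMRVIdx

/-- Levels `v` at which `cone h v` is a `μ`-continuity set and its mass beyond the unit sphere
varies continuously with `v`. -/
def goodLevels {d : ℕ} (μ : Measure (Fin d → ℝ)) (h : (Fin d → ℝ) → ℝ) : Set ℝ :=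
  {v | μ {x | v * ‖x‖ = h x} = 0 ∧
    ContinuousAt (fun w => μ.real ({x | 1 < ‖x‖} ∩ cone h w)) v}

lemma IsMRVIdx.countable_diff_goodLevels {Ω : Type*} [MeasurableSpace Ω] {P : Measure Ω}
    {d : ℕ} {X : Ω → Fin d → ℝ} {β : ℝ} {b : ℝ → ℝ} {μ : Measure (Fin d → ℝ)}
    (hX : IsMRVIdx P X β b μ) {h : (Fin d → ℝ) → ℝ} (hh : Measurable h) :
    (Ioi 0 \ goodLevels μ h).Countable := by
  have hanti : Antitone fun w => μ.real ({x | 1 < ‖x‖} ∩ cone h w) := fun v w hvw =>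
    measureReal_mono (inter_subset_inter_right _ (cone_subset_cone hvw))
      (measure_ne_top_of_subset inter_subset_left (hX.measure_norm_gt_ne_top one_pos))
  refine ((hX.countable_not_measure_cone_level_eq_zero hh).union
    hanti.countable_not_continuousAt).mono fun v ⟨hv, hvU⟩ => ?_
  by_cases hv0 : μ {x | v * ‖x‖ = h x} = 0
  · exact Or.inr fun hc => hvU ⟨hv0, hc⟩
  · exact Or.inl ⟨hv, hv0⟩

namespace IsAngular

variable {Ω : Type*} [MeasurableSpace Ω] {P : Measure Ω} {d : ℕ} {X : Ω → Fin d → ℝ}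
  {β : ℝ} {b : ℝ → ℝ} {μ σ : Measure (Fin d → ℝ)} {f h : (Fin d → ℝ) → ℝ}

/-- Were the integrand not integrable for arbitrarily large `t`, the junk value `0` of its
integral would force both `∫ f dσ` and `∫ (1 - f) dσ` to vanish. -/
lemma eventually_integrable [IsFiniteMeasure P] (hσ : IsAngular P X σ) (hf : Continuous f)
    {C : ℝ} (hfC : ∀ x, |f x| ≤ C) :
    ∀ᶠ t : ℝ in atTop,
      Integrable (fun ω => f (‖X ω‖⁻¹ • X ω)) (P.restrict {ω | t < ‖X ω‖}) := by
  obtain ⟨hprob, -, hconv⟩ := hσ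
  by_contra hne
  rw [not_eventually] at hne
  have hfσ : Integrable f σ := .of_bound hf.aestronglyMeasurable C
    (ae_of_all _ fun x => (Real.norm_eq_abs _).trans_le (hfC x))
  have h1 : ∫ θ, f θ ∂σ = 0 :=
    tendsto_nhds_unique_of_frequently_eq (hconv f hf ⟨C, hfC⟩) tendsto_const_nhds
      (hne.mono fun t ht => by rw [integral_undef ht, zero_div])
  have h2 : ∫ θ, (1 - f θ) ∂σ = 0 := by
    refine tendsto_nhds_unique_of_frequently_eq (hconv _ (continuous_const.sub hf)
      ⟨1 + C, fun x => (abs_sub _ _).trans (by rw [abs_one]; linarith [hfC x])⟩)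
      tendsto_const_nhds (hne.mono fun t ht => ?_)
    have hni : ¬Integrable (fun ω => 1 - f (‖X ω‖⁻¹ • X ω)) (P.restrict {ω | t < ‖X ω‖}) :=
      fun hi => ht (((integrable_const 1).sub hi).congr (ae_of_all _ fun ω => sub_sub_cancel 1 _))
    rw [integral_undef hni, zero_div]
  rw [integral_sub (integrable_const 1) hfσ, h1, integral_const] at h2
  simp at h2

lemma tendsto_mul_setIntegral (hX : IsMRVIdx P X β b μ) (hσ : IsAngular P X σ)
    (hf : Continuous f) {C : ℝ} (hfC : ∀ x, |f x| ≤ C) :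
    Tendsto (fun t : ℝ => b t * ∫ ω in {ω | t < ‖X ω‖}, f (‖X ω‖⁻¹ • X ω) ∂P) atTop
      (𝓝 (μ.real {x | 1 < ‖x‖} * ∫ θ, f θ ∂σ)) := by
  refine (mul_comm (∫ θ, f θ ∂σ) _ ▸ (hσ.2.2 f hf ⟨C, hfC⟩).mul hX.tendsto_norm_gt).congr' ?_
  filter_upwards [hX.tendsto_norm_gt.eventually
    (eventually_gt_nhds hX.measureReal_norm_gt_one_pos)] with t ht
  have hP : (P {ω | t < ‖X ω‖}).toReal ≠ 0 := fun h0 => by simp [h0] at ht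
  field_simp

/-- Both bounds come from squeezing the angular integral of a continuous ramp in `h`, which is
`1` above `u` and `0` below `u'`, between the probabilities of two cone events. -/
lemma measureReal_cone_sandwich [IsFiniteMeasure P] (hX : IsMRVIdx P X β b μ)
    (hσ : IsAngular P X σ) (hh : Continuous h) (hhom : ∀ c : ℝ, 0 < c → ∀ x, h (c • x) = c * h x)
    {u' u : ℝ} (hu'u : u' < u) (hu' : μ {x | u' * ‖x‖ = h x} = 0)
    (hu : μ {x | u * ‖x‖ = h x} = 0) :
    μ.real ({x | 1 < ‖x‖} ∩ cone h u) ≤ μ.real {x | 1 < ‖x‖} * σ.real {x | u' < h x} ∧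
      μ.real {x | 1 < ‖x‖} * σ.real {x | u < h x} ≤ μ.real ({x | 1 < ‖x‖} ∩ cone h u') := by
  have := hσ.1
  obtain ⟨ρ, hρ, hρ0, hρ1, hρu, hρu'⟩ := exists_continuous_ramp hu'u
  have hf : Continuous (ρ ∘ h) := hρ.comp hh
  have hfC : ∀ x, |(ρ ∘ h) x| ≤ 1 := fun x =>
    abs_le.2 ⟨(neg_one_lt_zero.trans_le (hρ0 (h x))).le, hρ1 _⟩
  have hbounds : ∀ᶠ t : ℝ in atTop,
      b t * P.real {ω | t < ‖X ω‖ ∧ X ω ∈ cone h u}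
        ≤ b t * ∫ ω in {ω | t < ‖X ω‖}, (ρ ∘ h) (‖X ω‖⁻¹ • X ω) ∂P ∧
      b t * ∫ ω in {ω | t < ‖X ω‖}, (ρ ∘ h) (‖X ω‖⁻¹ • X ω) ∂P
        ≤ b t * P.real {ω | t < ‖X ω‖ ∧ X ω ∈ cone h u'} := by
    filter_upwards [hσ.eventually_integrable hf hfC, eventually_gt_atTop 0, hX.eventually_pos]
      with t hint ht hbt
    refine ⟨mul_le_mul_of_nonneg_left ?_ hbt.le, mul_le_mul_of_nonneg_left ?_ hbt.le⟩
    · refine measureReal_le_setIntegral hint (fun _ => hρ0 _) (fun ω hω => hω.1) fun ω hω => ?_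
      exact (hρu _ ((lt_apply_inv_norm_smul_iff hhom (ht.trans hω.1)).2 hω.2).le).ge
    · refine setIntegral_le_measureReal hint (fun _ => hρ1 _) fun ω (hω : t < ‖X ω‖) hpos => ?_
      exact ⟨hω, (lt_apply_inv_norm_smul_iff hhom (ht.trans hω)).1 (hρu' _ hpos)⟩
  have hlim := hσ.tendsto_mul_setIntegral hX hf hfC
  have hfσ : Integrable (ρ ∘ h) (σ.restrict univ) := .of_bound hf.aestronglyMeasurable 1
    (ae_of_all _ fun x => (Real.norm_eq_abs _).trans_le (hfC x))
  have hσu : σ.real {x | u < h x} ≤ ∫ θ, (ρ ∘ h) θ ∂σ := by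
    simpa using measureReal_le_setIntegral hfσ (fun _ => hρ0 _) (subset_univ {x | u < h x})
      fun x (hx : u < h x) => (hρu _ hx.le).ge
  have hσu' : ∫ θ, (ρ ∘ h) θ ∂σ ≤ σ.real {x | u' < h x} := by
    simpa using setIntegral_le_measureReal hfσ (fun _ => hρ1 _) (S := {x | u' < h x})
      fun x _ hpos => hρu' _ hpos
  have hc := hX.measureReal_norm_gt_one_pos.le
  exact ⟨(le_of_tendsto_of_tendsto (hX.tendsto_norm_gt_inter_cone hh hhom hu) hlim
      (hbounds.mono fun _ h => h.1)).trans (mul_le_mul_of_nonneg_left hσu' hc),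
    (mul_le_mul_of_nonneg_left hσu hc).trans (le_of_tendsto_of_tendsto hlim
      (hX.tendsto_norm_gt_inter_cone hh hhom hu') (hbounds.mono fun _ h => h.2))⟩

lemma measureReal_cone_eq [IsFiniteMeasure P] (hX : IsMRVIdx P X β b μ) (hσ : IsAngular P X σ)
    (hh : Continuous h) (hhom : ∀ c : ℝ, 0 < c → ∀ x, h (c • x) = c * h x) {u : ℝ} (hu : 0 < u)
    (hgood : u ∈ goodLevels μ h) :
    μ.real ({x | 1 < ‖x‖} ∩ cone h u) = μ.real {x | 1 < ‖x‖} * σ.real {x | u < h x} := by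
  set D := {v : ℝ | μ {x | v * ‖x‖ = h x} = 0}
  have hD : (Ioi 0 \ D).Countable := hX.countable_not_measure_cone_level_eq_zero hh.measurable
  have := nhdsWithin_Ioo_neBot_of_countable_diff hD hu
  have := nhdsWithin_Ioi_neBot_of_countable_diff hD hu.le
  have hΛ := fun s : Set ℝ => hgood.2.tendsto.mono_left (nhdsWithin_le_nhds (s := s))
  exact le_antisymm
    (le_of_tendsto (hΛ _) (eventually_nhdsWithin_of_forall fun v (hv : v ∈ D ∩ Ioi u) =>
      (hσ.measureReal_cone_sandwich hX hh hhom hv.2 hgood.1 hv.1).1))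
    (ge_of_tendsto (hΛ _) (eventually_nhdsWithin_of_forall fun v (hv : v ∈ D ∩ Ioo 0 u) =>
      (hσ.measureReal_cone_sandwich hX hh hhom hv.2.2 hv.1 hgood.1).2))

lemma measure_cell_eq [IsFiniteMeasure P] (hX : IsMRVIdx P X β b μ) (hσ : IsAngular P X σ)
    (hh : Continuous h) (hhom : ∀ c : ℝ, 0 < c → ∀ x, h (c • x) = c * h x) {u v : ℝ}
    (hu : 0 < u) (huv : u ≤ v) (hug : u ∈ goodLevels μ h) (hvg : v ∈ goodLevels μ h) :
    μ ({x | 1 < ‖x‖} ∩ (cone h u \ cone h v)) = μ {x | 1 < ‖x‖} * σ (h ⁻¹' Ioc u v) := by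
  have := hσ.1
  have hAf := hX.measure_norm_gt_ne_top one_pos
  have hpre : h ⁻¹' Ioc u v = {x | u < h x} \ {x | v < h x} := by ext; simp [not_lt]
  have hreal : μ.real ({x | 1 < ‖x‖} ∩ (cone h u \ cone h v)) =
      μ.real {x | 1 < ‖x‖} * σ.real (h ⁻¹' Ioc u v) := by
    rw [inter_sdiff_distrib_left, measureReal_sdiff (inter_subset_inter_right _
        (cone_subset_cone huv)) ((measurableSet_lt measurable_const measurable_norm).inter
        (measurableSet_cone hh.measurable v)) (measure_ne_top_of_subset inter_subset_left hAf),
      hσ.measureReal_cone_eq hX hh hhom hu hug,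
      hσ.measureReal_cone_eq hX hh hhom (hu.trans_le huv) hvg, hpre,
      measureReal_sdiff (μ := σ) (show {x | v < h x} ⊆ {x | u < h x} from
        fun x (hx : v < h x) => huv.trans_lt hx) (measurableSet_lt measurable_const hh.measurable),
      mul_sub]
  rw [← ofReal_measureReal (measure_ne_top_of_subset inter_subset_left hAf), hreal,
    ENNReal.ofReal_mul measureReal_nonneg, ofReal_measureReal hAf, ofReal_measureReal]

/-- On a cell `(u, q u]` with good endpoints, both sides of the polar formula lie between
`u ^ β` and `(q u) ^ β` times `c_μ σ {u < h ≤ q u}`, hence within a factor `q ^ β` of each other. -/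
lemma measure_gt_one_inter_cell_comparison [IsFiniteMeasure P] (hX : IsMRVIdx P X β b μ)
    (hσ : IsAngular P X σ) (hh : Continuous h) (hhom : ∀ c : ℝ, 0 < c → ∀ x, h (c • x) = c * h x)
    {q u : ℝ} (hq : 1 < q) (hu : 0 < u) (hug : u ∈ goodLevels μ h)
    (hqug : q * u ∈ goodLevels μ h) :
    μ ({x | 1 < h x} ∩ (cone h u \ cone h (q * u))) ≤ ENNReal.ofReal (q ^ β) *
        (μ {x | 1 < ‖x‖} * ∫⁻ θ in h ⁻¹' Ioc u (q * u), ENNReal.ofReal (h θ ^ β) ∂σ) ∧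
      μ {x | 1 < ‖x‖} * ∫⁻ θ in h ⁻¹' Ioc u (q * u), ENNReal.ofReal (h θ ^ β) ∂σ ≤
        ENNReal.ofReal (q ^ β) * μ ({x | 1 < h x} ∩ (cone h u \ cone h (q * u))) := by
  have huq : u ≤ q * u := le_mul_of_one_le_left hu.le hq.le
  have hrpow : ENNReal.ofReal ((q * u) ^ β) = ENNReal.ofReal (q ^ β) * ENNReal.ofReal (u ^ β) := by
    rw [Real.mul_rpow (zero_lt_one.trans hq).le hu.le, ENNReal.ofReal_mul (by positivity)]
  have hμ := hX.measure_gt_one_inter_cell_bounds hh hhom hu huq hug.1 hqug.1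
  have hσ' := setLIntegral_ofReal_rpow_preimage_Ioc_bounds (σ := σ) hh.measurable (v := q * u)
    hu.le hX.pos.le
  rw [hσ.measure_cell_eq hX hh hhom hu huq hug hqug, hrpow] at hμ
  rw [hrpow] at hσ'
  constructor
  · calc _ ≤ _ := hμ.2
      _ = ENNReal.ofReal (q ^ β) * (μ {x | 1 < ‖x‖} *
            (ENNReal.ofReal (u ^ β) * σ (h ⁻¹' Ioc u (q * u)))) := by ring
      _ ≤ _ := by gcongr; exact hσ'.1
  · calc _ ≤ μ {x | 1 < ‖x‖} *
            (ENNReal.ofReal (q ^ β) * ENNReal.ofReal (u ^ β) * σ (h ⁻¹' Ioc u (q * u))) := by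
          gcongr; exact hσ'.2
      _ = ENNReal.ofReal (q ^ β) * (ENNReal.ofReal (u ^ β) *
            (μ {x | 1 < ‖x‖} * σ (h ⁻¹' Ioc u (q * u)))) := by ring
      _ ≤ _ := by gcongr; exact hμ.1

lemma measure_gt_one_eq_mul_lintegral [IsFiniteMeasure P] (hX : IsMRVIdx P X β b μ)
    (hσ : IsAngular P X σ) (hh : Continuous h)
    (hhom : ∀ c : ℝ, 0 < c → ∀ x, h (c • x) = c * h x) (hnonneg : ∀ x, 0 ≤ h x) :
    μ {x | 1 < h x} = μ {x | 1 < ‖x‖} * ∫⁻ θ, ENNReal.ofReal (h θ ^ β) ∂σ := by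
  have hg : Measurable fun x : Fin d → ℝ => h x / ‖x‖ := hh.measurable.div measurable_norm
  set ν₁ := (μ.restrict {x | 1 < h x}).map fun x => h x / ‖x‖
  set ν₂ := μ {x | 1 < ‖x‖} • (σ.withDensity fun θ => ENNReal.ofReal (h θ ^ β)).map h
  have hν₁ : ∀ s, MeasurableSet s → ν₁ s = μ ({x | 1 < h x} ∩ (fun x => h x / ‖x‖) ⁻¹' s) :=
    fun s hs => by rw [Measure.map_apply hg hs, Measure.restrict_apply (hg hs), inter_comm]
  have hν₂ : ∀ s, MeasurableSet s →
      ν₂ s = μ {x | 1 < ‖x‖} * ∫⁻ θ in h ⁻¹' s, ENNReal.ofReal (h θ ^ β) ∂σ := fun s hs => by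
    rw [Measure.smul_apply, Measure.map_apply hh.measurable hs,
      withDensity_apply _ (hh.measurable hs), smul_eq_mul]
  have hcell : ∀ q, 1 < q → ∀ u ∈ goodLevels μ h, 0 < u → q * u ∈ goodLevels μ h →
      ν₁ (Ioc u (q * u)) ≤ ENNReal.ofReal (q ^ β) * ν₂ (Ioc u (q * u)) ∧
      ν₂ (Ioc u (q * u)) ≤ ENNReal.ofReal (q ^ β) * ν₁ (Ioc u (q * u)) := by
    intro q hq u hug hu hqug
    rw [hν₁ _ measurableSet_Ioc, hν₂ _ measurableSet_Ioc, setOf_one_lt_inter_preimage_div_norm hhom]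
    exact hσ.measure_gt_one_inter_cell_comparison hX hh hhom hq hu hug hqug
  have h₁ : ν₁ (Ioi 0) = μ {x | 1 < h x} := by
    have hsub : {x | 1 < h x} ⊆ (fun x => h x / ‖x‖) ⁻¹' Ioi 0 := fun x (hx : 1 < h x) =>
      div_pos (zero_lt_one.trans hx)
        (norm_pos_of_homogeneous_ne_zero hhom (zero_lt_one.trans hx).ne')
    rw [hν₁ _ measurableSet_Ioi, inter_eq_left.2 hsub]
  have h₂ : ν₂ (Ioi 0) = μ {x | 1 < ‖x‖} * ∫⁻ θ, ENNReal.ofReal (h θ ^ β) ∂σ := by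
    rw [hν₂ _ measurableSet_Ioi, ← lintegral_indicator (hh.measurable measurableSet_Ioi)]
    refine congrArg _ (lintegral_congr fun θ => ?_)
    rcases (hnonneg θ).lt_or_eq with hθ | hθ
    · exact indicator_of_mem (show θ ∈ h ⁻¹' Ioi 0 from hθ) _
    · rw [indicator_of_notMem (show θ ∉ h ⁻¹' Ioi 0 from hθ.symm.not_gt), ← hθ,
        Real.zero_rpow hX.pos.ne', ENNReal.ofReal_zero]
  have hU := hX.countable_diff_goodLevels hh.measurable
  rw [← h₁, ← h₂]
  exact le_antisymm
    (ENNReal.le_of_forall_one_lt_le_ofReal_rpow_mul fun q hq =>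
      measure_Ioi_zero_le_of_forall_Ioc hU hq fun u hug hu hqug => (hcell q hq u hug hu hqug).1)
    (ENNReal.le_of_forall_one_lt_le_ofReal_rpow_mul fun q hq =>
      measure_Ioi_zero_le_of_forall_Ioc hU hq fun u hug hu hqug => (hcell q hq u hug hu hqug).2)

end IsAngular

/-- if `X ∈ RV_β(ℝ^d,{b(t)},μ)` with angular measure `σ`, then for every
continuous, nonnegative, 1-homogeneous `h`, one has
`b(t)·P[h(X) > t] → c_μ · E[h(Θ)^β]` where `c_μ = μ{x : ‖x‖ > 1}` and `Θ ∼ σ`. -/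
theorem stmt0 {Ω : Type*} [MeasurableSpace Ω] (P : Measure Ω) [IsProbabilityMeasure P]
    {d : ℕ} (X : Ω → Fin d → ℝ) (β : ℝ) (b : ℝ → ℝ)
    (μ σ : Measure (Fin d → ℝ))
    (hX : IsMRVIdx P X β b μ) (hσ : IsAngular P X σ)
    (h : (Fin d → ℝ) → ℝ) (hcont : Continuous h) (hnonneg : ∀ x, 0 ≤ h x)
    (hhom : ∀ c : ℝ, 0 < c → ∀ x, h (c • x) = c * h x) :
    Tendsto (fun t : ℝ => b t * (P {ω | t < h (X ω)}).toReal) atTop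
      (nhds ((μ {x | 1 < ‖x‖}).toReal * ∫ θ, h θ ^ β ∂σ)) := by
  have hint : ∫ θ, h θ ^ β ∂σ = (∫⁻ θ, ENNReal.ofReal (h θ ^ β) ∂σ).toReal :=
    integral_eq_lintegral_of_nonneg_ae (ae_of_all _ fun θ => Real.rpow_nonneg (hnonneg θ) β)
      (hcont.measurable.pow_const β).aestronglyMeasurable
  rw [hint, ← ENNReal.toReal_mul, ← hσ.measure_gt_one_eq_mul_lintegral hX hcont hhom hnonneg]
  exact hX.tendsto_gt hcont hhom
end
end

section
/- Let P_1, …, P_d be Uniform(0,1) random variables and set X_i := 1/(1 − P_i), so each X_i is standard 1-Pareto. Assume that the vector X = (X_1, …, X_d) ∈ RV_{β=1}(ℝ^d, {b(t)}, μ). Then for all weights w_1, …, w_d ≥ 0 with Σ_{i=1}^d w_i = 1, lim_{t→∞} P[Σ_{i=1}^d w_i X_i > t] / P[X_1 > t] = 1. In other words, the linear Pareto combination test is asymptotically calibrated for every multivariate regularly varying dependence structure. -/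
open MeasureTheory Filter Topology
open scoped Pointwise

noncomputable section

/-!
Regular variation with index one makes every half-space tail homogeneous: for a linear functional
`L`, the antitone function `s ↦ μ {L > eˢ}` has a dense set of continuity points, at which the
defining limits exist; comparing thresholds `t eˢ` through the slowly varying part of `b` shows
that `eˢ μ {L > eˢ}` is constant there, hence everywhere. So `b t · P[L X > t]` converges, and
`μ {L > u} = c / u`. The exact Pareto marginals give `b t / t → c > 0` (with `c = 0` every
coordinate half-space would be `μ`-null, forcing `μ = 0`), hence `t · P[∑ wᵢ Xᵢ > t] → κ`.
By an Abelian argument the truncated mean `E[min (∑ wᵢ Xᵢ) T] = ∫₀ᵀ P[∑ wᵢ Xᵢ > t] dt` is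
`κ log T + o(log T)`. On the other hand, concavity and subadditivity of `min · T` squeeze it
between `1 + log T` and `log T + ∑ wᵢ (1 - log wᵢ)`, using `E[min X T] = 1 + log T` for a
standard Pareto `X`. Hence `κ = 1`.
-/

open Real Set

lemma min_add_le_add_min {a b T : ℝ} (ha : 0 ≤ a) (hb : 0 ≤ b) (hT : 0 ≤ T) :
    min (a + b) T ≤ min a T + min b T := by
  simp only [min_def]
  split_ifs <;> linarith

lemma min_sum_le_sum_min {ι : Type*} (s : Finset ι) {a : ι → ℝ} (ha : ∀ i ∈ s, 0 ≤ a i)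
    {T : ℝ} (hT : 0 ≤ T) : min (∑ i ∈ s, a i) T ≤ ∑ i ∈ s, min (a i) T :=
  Finset.le_sum_of_subadditive_on_pred (fun x => min x T) (0 ≤ ·) (min_le_left _ _)
    (fun _ _ hx hy => min_add_le_add_min hx hy hT) (fun _ _ => add_nonneg) a ha

lemma sum_mul_min_le_min_sum {ι : Type*} (s : Finset ι) {w : ι → ℝ} (hw : ∀ i ∈ s, 0 ≤ w i)
    (hws : ∑ i ∈ s, w i = 1) (a : ι → ℝ) (T : ℝ) :
    ∑ i ∈ s, w i * min (a i) T ≤ min (∑ i ∈ s, w i * a i) T := by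
  simpa using ((concaveOn_id convex_univ).inf (concaveOn_const T convex_univ)).le_map_sum hw hws
    (p := a) fun i _ => mem_univ _

lemma tendsto_add_mul_log_div_log (C a : ℝ) :
    Tendsto (fun T => (C + a * log T) / log T) atTop (𝓝 a) := by
  have h := (tendsto_const_nhds (x := C)).div_atTop tendsto_log_atTop |>.add_const a
  rw [zero_add] at h
  refine h.congr' ?_
  filter_upwards [tendsto_log_atTop.eventually_gt_atTop 0] with T hT
  field_simp

lemma eventually_lt_integral_div_log {G : ℝ → ℝ} (hG : ∀ T, IntervalIntegrable G volume 0 T)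
    {a a' : ℝ} (ha : ∀ᶠ t in atTop, a ≤ t * G t) (ha' : a' < a) :
    ∀ᶠ T in atTop, a' < (∫ t in (0)..T, G t) / log T := by
  obtain ⟨M, hM⟩ := eventually_atTop.1 (ha.and (eventually_gt_atTop 0))
  have hM0 : 0 < M := (hM M le_rfl).2
  have hlow : ∀ T, M ≤ T →
      (∫ t in (0)..M, G t) - a * log M + a * log T ≤ ∫ t in (0)..T, G t := by
    intro T hMT
    have hinv : ContinuousOn (fun t => a * t⁻¹) (uIcc M T) :=
      continuousOn_const.mul <| continuousOn_inv₀.mono fun t ht =>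
        (hM0.trans_le (uIcc_of_le hMT ▸ ht).1).ne'
    have hG_ge : a * log (T / M) ≤ ∫ t in M..T, G t := by
      rw [← integral_inv_of_pos hM0 (hM0.trans_le hMT), ← intervalIntegral.integral_const_mul]
      refine intervalIntegral.integral_mono_on hMT hinv.intervalIntegrable
        ((hG M).symm.trans (hG T)) fun t ht => ?_
      have ht0 : 0 < t := hM0.trans_le ht.1
      rw [← div_eq_mul_inv, div_le_iff₀' ht0]
      exact (hM t ht.1).1
    rw [← intervalIntegral.integral_add_adjacent_intervals (hG M) ((hG M).symm.trans (hG T))]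
    rw [log_div (hM0.trans_le hMT).ne' hM0.ne'] at hG_ge
    linarith
  filter_upwards [(tendsto_add_mul_log_div_log _ a).eventually (lt_mem_nhds ha'),
    eventually_ge_atTop M, eventually_gt_atTop 1] with T hT hMT hT1
  exact hT.trans_le (div_le_div_of_nonneg_right (hlow T hMT) (log_pos hT1).le)

lemma tendsto_integral_div_log_of_tendsto_mul {G : ℝ → ℝ}
    (hG : ∀ T, IntervalIntegrable G volume 0 T) {c : ℝ}
    (h : Tendsto (fun t => t * G t) atTop (𝓝 c)) :
    Tendsto (fun T => (∫ t in (0)..T, G t) / log T) atTop (𝓝 c) := by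
  rw [tendsto_order]
  refine ⟨fun a' ha' => ?_, fun a' ha' => ?_⟩
  · obtain ⟨a, ha'a, hac⟩ := exists_between ha'
    exact eventually_lt_integral_div_log hG (h.eventually (le_mem_nhds hac)) ha'a
  · obtain ⟨a, hca, haa'⟩ := exists_between ha'
    have hneg := eventually_lt_integral_div_log (G := -G) (fun T => (hG T).neg) (a := -a)
      ((h.eventually (ge_mem_nhds hca)).mono fun t ht => by simpa using ht) (neg_lt_neg haa')
    filter_upwards [hneg] with T hT
    simp only [Pi.neg_apply, intervalIntegral.integral_neg, neg_div] at hT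
    linarith

lemma Antitone.eq_of_eqOn_dense {f g : ℝ → ℝ} (hf : Antitone f) (hg : Continuous g) {D : Set ℝ}
    (hD : Dense D) (hfg : EqOn f g D) : f = g := by
  have hclosure : ∀ {I : Set ℝ}, IsOpen I → closure I ⊆ closure (I ∩ D) := fun hI =>
    closure_minimal (hD.open_subset_closure_inter hI) isClosed_closure
  funext s
  apply le_antisymm
  · have hsub : Iio s ∩ D ⊆ {p | f s ≤ g p} := fun p ⟨hp, hpD⟩ =>
      (hf hp.le).trans_eq (hfg hpD)
    exact (isClosed_le continuous_const hg).closure_subset_iff.2 hsub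
      (hclosure isOpen_Iio (by simp [closure_Iio]))
  · have hsub : Ioi s ∩ D ⊆ {p | g p ≤ f s} := fun p ⟨hp, hpD⟩ =>
      (hfg hpD).symm.trans_le (hf hp.le)
    exact (isClosed_le hg continuous_const).closure_subset_iff.2 hsub
      (hclosure isOpen_Ioi (by simp [closure_Ioi]))

lemma measure_eq_zero_of_continuousAt_measureReal_exp_lt {α : Type*} [MeasurableSpace α]
    {ν : Measure α} {φ : α → ℝ} (hφ : Measurable φ) (hfin : ∀ r, ν {x | exp r < φ x} ≠ ⊤)
    {s : ℝ} (hs : ContinuousAt (fun r => ν.real {x | exp r < φ x}) s) :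
    ν {x | exp s = φ x} = 0 := by
  have hle : ∀ r < s,
      ν.real {x | exp s = φ x} ≤ ν.real {x | exp r < φ x} - ν.real {x | exp s < φ x} := by
    intro r hr
    have hsub : {x | exp s < φ x} ⊆ {x | exp r < φ x} := fun x hx => (exp_lt_exp.2 hr).trans hx
    rw [← measureReal_sdiff hsub (measurableSet_lt measurable_const hφ) (hfin r)]
    exact measureReal_mono (fun x hx => ⟨(exp_lt_exp.2 hr).trans_eq hx, hx.ge.not_gt⟩)
      (ne_top_of_le_ne_top (hfin r) (measure_mono sdiff_subset))
  have hlim : Tendsto (fun r => ν.real {x | exp r < φ x} - ν.real {x | exp s < φ x})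
      (𝓝[<] s) (𝓝 0) := by
    simpa using (hs.tendsto.mono_left nhdsWithin_le_nhds).sub_const (ν.real {x | exp s < φ x})
  have hZfin : ν {x | exp s = φ x} ≠ ⊤ := ne_top_of_le_ne_top (hfin (s - 1)) <| measure_mono
    fun x hx => (exp_lt_exp.2 (sub_one_lt s)).trans_eq hx
  exact (measureReal_eq_zero_iff hZfin).1 <|
    (ge_of_tendsto hlim (eventually_nhdsWithin_of_forall hle)).antisymm measureReal_nonneg

lemma MeasureTheory.Measure.eq_zero_of_measure_lt_abs_eq_zero {ι : Type*} [Countable ι]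
    {ν : Measure (ι → ℝ)} (h0 : ν {0} = 0) (h : ∀ i, ∀ u > 0, ν {x | u < |x i|} = 0) :
    ν = 0 := by
  rw [← Measure.measure_univ_eq_zero]
  refine measure_mono_null (t := {0} ∪ ⋃ (n : ℕ) (i : ι), {x | 1 / ((n : ℝ) + 1) < |x i|})
    (fun x _ => ?_) (measure_union_null h0 <| measure_iUnion_null fun n =>
      measure_iUnion_null fun i => h i _ (by positivity))
  by_cases hx : x = 0
  · exact Or.inl hx
  obtain ⟨i, hi⟩ := Function.ne_iff.1 hx
  obtain ⟨n, hn⟩ := exists_nat_one_div_lt (abs_pos.2 hi)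
  exact Or.inr (mem_iUnion₂.2 ⟨n, i, hn⟩)

lemma antitone_measureReal_lt {Ω : Type*} [MeasurableSpace Ω] (P : Measure Ω)
    [IsFiniteMeasure P] (Y : Ω → ℝ) : Antitone fun t => P.real {ω | t < Y ω} :=
  fun _ _ hst => measureReal_mono fun _ h => hst.trans_lt h

section Pareto

variable {Ω : Type*} [MeasurableSpace Ω] {P : Measure Ω}

lemma integrable_min_of_nonneg [IsFiniteMeasure P] {Y : Ω → ℝ} (hY : AEMeasurable Y P)
    (hY0 : 0 ≤ᵐ[P] Y) {T : ℝ} (hT : 0 ≤ T) : Integrable (fun ω => min (Y ω) T) P := by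
  refine .of_bound (hY.min aemeasurable_const).aestronglyMeasurable T ?_
  filter_upwards [hY0] with ω h
  rw [Real.norm_eq_abs, abs_of_nonneg (le_min h hT)]
  exact min_le_right _ _

lemma integral_min_eq_intervalIntegral [IsFiniteMeasure P] {Y : Ω → ℝ} (hY : AEMeasurable Y P)
    (hY0 : 0 ≤ᵐ[P] Y) {T : ℝ} (hT : 0 ≤ T) :
    ∫ ω, min (Y ω) T ∂P = ∫ t in (0)..T, P.real {ω | t < Y ω} := by
  have hnn : 0 ≤ᵐ[P] fun ω => min (Y ω) T := by
    filter_upwards [hY0] with ω h using le_min h hT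
  have htrunc : ∀ t, P.real {ω | t < min (Y ω) T} =
      (Iio T).indicator (fun t => P.real {ω | t < Y ω}) t := by
    intro t
    by_cases ht : t < T <;> simp [ht]
  rw [(integrable_min_of_nonneg hY hY0 hT).integral_eq_integral_meas_lt hnn]
  simp_rw [htrunc]
  rw [setIntegral_indicator measurableSet_Iio, Ioi_inter_Iio, intervalIntegral.integral_of_le hT,
    integral_Ioc_eq_integral_Ioo]

structure IsStdPareto (P : Measure Ω) (Y : Ω → ℝ) : Prop where
  aemeasurable : AEMeasurable Y P
  ae_one_lt : ∀ᵐ ω ∂P, 1 < Y ω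
  measureReal_lt : ∀ u, 1 ≤ u → P.real {ω | u < Y ω} = u⁻¹

lemma isStdPareto_one_div_one_sub {U : Ω → ℝ} (hU : P.map U = volume.restrict (Ioo 0 1)) :
    IsStdPareto P fun ω => 1 / (1 - U ω) := by
  have hUm : AEMeasurable U P := .of_map_ne_zero (by simp [hU])
  have hpre : ∀ s, MeasurableSet s → P (U ⁻¹' s) = volume (s ∩ Ioo 0 1) := fun s hs => by
    rw [← Measure.map_apply_of_aemeasurable hUm hs, hU, Measure.restrict_apply hs]
  have hU01 : ∀ᵐ ω ∂P, U ω ∈ Ioo 0 1 := by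
    rw [ae_iff]
    change P (U ⁻¹' (Ioo 0 1)ᶜ) = 0
    rw [hpre _ measurableSet_Ioo.compl, compl_inter_self, measure_empty]
  refine ⟨aemeasurable_const.div (aemeasurable_const.sub hUm), ?_, fun u hu => ?_⟩
  · filter_upwards [hU01] with ω ⟨h0, h1⟩
    rw [lt_div_iff₀ (by linarith)]
    linarith
  · have hu0 : 0 < u := one_pos.trans_le hu
    have hset : {ω | u < 1 / (1 - U ω)} =ᵐ[P] U ⁻¹' Ioo (1 - u⁻¹) 1 := by
      refine eventuallyEq_set.2 ?_
      filter_upwards [hU01] with ω ⟨h0, h1⟩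
      simp only [mem_preimage, mem_Ioo, h1, and_true]
      rw [lt_one_div hu0 (by linarith), one_div]
      constructor <;> intro <;> linarith
    have hsub : Ioo (1 - u⁻¹) 1 ⊆ Ioo (0 : ℝ) 1 :=
      Ioo_subset_Ioo_left (sub_nonneg.2 (inv_le_one_of_one_le₀ hu))
    rw [measureReal_def, measure_congr hset, hpre _ measurableSet_Ioo, inter_eq_left.2 hsub,
      Real.volume_Ioo, sub_sub_cancel, ENNReal.toReal_ofReal (inv_nonneg.2 hu0.le)]

namespace IsStdPareto

variable {Y : Ω → ℝ} (hY : IsStdPareto P Y)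
include hY

lemma measureReal_lt_of_le_one [IsProbabilityMeasure P] {u : ℝ} (hu : u ≤ 1) :
    P.real {ω | u < Y ω} = 1 := by
  have hae : {ω | u < Y ω} =ᵐ[P] univ :=
    eventuallyEq_univ.2 (hY.ae_one_lt.mono fun _ h => hu.trans_lt h)
  rw [measureReal_def, measure_congr hae, measure_univ, ENNReal.toReal_one]

lemma ae_nonneg : 0 ≤ᵐ[P] Y :=
  hY.ae_one_lt.mono fun _ h => zero_le_one.trans h.le

lemma integral_min [IsProbabilityMeasure P] {T : ℝ} (hT : 1 ≤ T) :
    ∫ ω, min (Y ω) T ∂P = 1 + log T := by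
  have hint : ∀ a c : ℝ, IntervalIntegrable (fun t => P.real {ω | t < Y ω}) volume a c :=
    fun _ _ => (antitone_measureReal_lt P Y).intervalIntegrable
  rw [integral_min_eq_intervalIntegral hY.aemeasurable hY.ae_nonneg (by linarith),
    ← intervalIntegral.integral_add_adjacent_intervals (hint 0 1) (hint 1 T),
    intervalIntegral.integral_congr (g := fun _ => (1 : ℝ)) fun t ht =>
      hY.measureReal_lt_of_le_one (uIcc_of_le (zero_le_one (α := ℝ)) ▸ ht).2,
    intervalIntegral.integral_congr (g := fun t => t⁻¹) fun t ht =>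
      hY.measureReal_lt t (uIcc_of_le hT ▸ ht).1,
    integral_inv_of_pos one_pos (by linarith), div_one]
  simp

lemma integral_min_const_mul [IsProbabilityMeasure P] {a T : ℝ} (ha : 0 ≤ a) (ha1 : a ≤ 1)
    (hT : 1 ≤ T) : ∫ ω, min (a * Y ω) T ∂P = a * (1 + log T - log a) := by
  rcases ha.eq_or_lt with rfl | ha0
  · simp [min_eq_left (zero_le_one.trans hT)]
  have hscale : ∀ ω, min (a * Y ω) T = a * min (Y ω) (T / a) := fun ω => by
    rw [mul_min_of_nonneg _ _ ha, mul_div_cancel₀ _ ha0.ne']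
  simp_rw [hscale, integral_const_mul]
  rw [hY.integral_min (by rw [le_div_iff₀ ha0]; nlinarith), log_div (by linarith) ha0.ne']
  ring

end IsStdPareto

end Pareto

section RegularVariation

variable {b l : ℝ → ℝ} (hl : SlowlyVarying l) (hbl : ∀ t > 0, b t = l t * t)
  (hb : Tendsto b atTop atTop)
include hl hbl hb

lemma tendsto_comp_mul_div_of_slowlyVarying {x : ℝ} (hx : 0 < x) :
    Tendsto (fun t => b (t * x) / b t) atTop (𝓝 x) := by
  have h := (hl x hx).mul_const x
  rw [one_mul] at h
  refine h.congr' ?_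
  filter_upwards [eventually_gt_atTop 0, hb.eventually_ne_atTop 0] with t ht hbt
  have hlt : l t ≠ 0 := fun h => hbt (by rw [hbl t ht, h, zero_mul])
  rw [hbl t ht, hbl _ (mul_pos ht hx)]
  field_simp

lemma tendsto_mul_comp_mul_of_slowlyVarying {g : ℝ → ℝ} {a x : ℝ} (hx : 0 < x)
    (hg : Tendsto (fun t => b t * g t) atTop (𝓝 a)) :
    Tendsto (fun t => b t * g (t * x)) atTop (𝓝 (a / x)) := by
  have hx' : Tendsto (fun t => t * x) atTop atTop := tendsto_id.atTop_mul_const hx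
  have h := (hg.comp hx').mul ((tendsto_comp_mul_div_of_slowlyVarying hl hbl hb hx).inv₀ hx.ne')
  rw [← div_eq_mul_inv] at h
  refine h.congr' ?_
  filter_upwards [(hb.comp hx').eventually_ne_atTop 0] with t hbt
  simp only [Function.comp_apply] at hbt ⊢
  field_simp

end RegularVariation

lemma smul_setOf_lt {E : Type*} [NormedAddCommGroup E] [NormedSpace ℝ E] (L : E →L[ℝ] ℝ)
    {t : ℝ} (ht : 0 < t) (u : ℝ) : t • {x | u < L x} = {x | t * u < L x} := by
  ext x
  rw [mem_smul_set_iff_inv_smul_mem₀ ht.ne']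
  simp [lt_inv_mul_iff₀ ht]

lemma bddAwayZero_setOf_lt_s2 {d : ℕ} (L : (Fin d → ℝ) →L[ℝ] ℝ) {u : ℝ} (hu : 0 < u) :
    BddAwayZero {x | u < L x} := by
  refine ⟨u / (‖L‖ + 1), by positivity, fun x hx => ?_⟩
  rw [div_le_iff₀ (by positivity)]
  calc u ≤ ‖L x‖ := hx.le.trans (le_abs_self _)
    _ ≤ ‖L‖ * ‖x‖ := L.le_opNorm x
    _ ≤ ‖x‖ * (‖L‖ + 1) := by nlinarith [norm_nonneg x]

namespace IsMRV

variable {Ω : Type*} [MeasurableSpace Ω] {P : Measure Ω} {d : ℕ} {X : Ω → Fin d → ℝ}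
  {b l : ℝ → ℝ} {μ : Measure (Fin d → ℝ)}

lemma measure_setOf_lt_ne_top (hmrv : IsMRV P X b μ) (L : (Fin d → ℝ) →L[ℝ] ℝ) {u : ℝ}
    (hu : 0 < u) : μ {x | u < L x} ≠ ⊤ :=
  hmrv.2.2.2.1 _ (measurableSet_lt measurable_const L.measurable) (bddAwayZero_setOf_lt_s2 L hu)

lemma tendsto_of_continuousAt (hmrv : IsMRV P X b μ) (L : (Fin d → ℝ) →L[ℝ] ℝ) {s : ℝ}
    (hs : ContinuousAt (fun r => μ.real {x | exp r < L x}) s) :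
    Tendsto (fun t => b t * P.real {ω | t * exp s < L (X ω)}) atTop
      (𝓝 (μ.real {x | exp s < L x})) := by
  have hfront : μ (frontier {x | exp s < L x}) = 0 :=
    measure_mono_null (frontier_lt_subset_eq continuous_const L.continuous) <|
      measure_eq_zero_of_continuousAt_measureReal_exp_lt L.measurable
        (fun r => hmrv.measure_setOf_lt_ne_top L (exp_pos r)) hs
  refine (hmrv.2.2.2.2 _ (measurableSet_lt measurable_const L.measurable)
    (bddAwayZero_setOf_lt_s2 L (exp_pos s)) hfront).congr' ?_
  filter_upwards [eventually_gt_atTop 0] with t ht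
  rw [smul_setOf_lt L ht]
  rfl

theorem exists_tendsto_mul_measureReal_lt (hmrv : IsMRV P X b μ) (hl : SlowlyVarying l)
    (hbl : ∀ t > 0, b t = l t * t) (L : (Fin d → ℝ) →L[ℝ] ℝ) :
    ∃ c, Tendsto (fun t => b t * P.real {ω | t < L (X ω)}) atTop (𝓝 c) ∧
      ∀ u > 0, μ {x | u < L x} = ENNReal.ofReal (c / u) := by
  -- In the variable `s = log u` the tail `u ↦ μ {L > u}` becomes antitone on all of `ℝ`.
  set f : ℝ → ℝ := fun r => μ.real {x | exp r < L x} with hf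
  have hanti : Antitone f := fun r s hrs =>
    measureReal_mono (fun x hx => (exp_le_exp.2 hrs).trans_lt hx)
      (hmrv.measure_setOf_lt_ne_top L (exp_pos r))
  have hD : Dense {s | ContinuousAt f s} := by
    simpa [compl_ofPred] using hanti.countable_not_continuousAt.dense_compl ℝ
  obtain ⟨q, hq⟩ := hD.nonempty
  have hscale : EqOn f (fun s => exp q * f q * exp (-s)) {s | ContinuousAt f s} := by
    intro s hs
    have hshift := tendsto_mul_comp_mul_of_slowlyVarying hl hbl hmrv.1 (exp_pos (s - q))
      (hmrv.tendsto_of_continuousAt L hq)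
    have hfs : f s = f q / exp (s - q) :=
      tendsto_nhds_unique (hmrv.tendsto_of_continuousAt L hs) <|
        hshift.congr fun t => by rw [mul_assoc, ← exp_add, sub_add_cancel]
    simp only [hfs, exp_sub, exp_neg]
    field_simp
  have hf_eq := hanti.eq_of_eqOn_dense (by fun_prop) hD hscale
  refine ⟨exp q * f q, ?_, fun u hu => ?_⟩
  · have h0 := hmrv.tendsto_of_continuousAt L (s := 0)
      (show ContinuousAt f 0 by rw [hf_eq]; fun_prop)
    have hf0 := congrFun hf_eq 0
    simp only [hf, exp_zero, neg_zero, mul_one] at h0 hf0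
    rwa [hf0] at h0
  · have hfu := congrFun hf_eq (log u)
    simp only [hf, exp_log hu, exp_neg] at hfu
    rw [← ENNReal.ofReal_toReal (hmrv.measure_setOf_lt_ne_top L hu), ← measureReal_def, hfu,
      div_eq_mul_inv]

lemma exists_tendsto_div_self (hmrv : IsMRV P X b μ) (hl : SlowlyVarying l)
    (hbl : ∀ t > 0, b t = l t * t) (hpar : ∀ i, IsStdPareto P fun ω => X ω i) (i₀ : Fin d) :
    ∃ c > 0, Tendsto (fun t => b t / t) atTop (𝓝 c) := by
  have hcoord : ∀ i, ∃ c, Tendsto (fun t => b t / t) atTop (𝓝 c) ∧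
      ∀ u > 0, μ {x | u < x i} = ENNReal.ofReal (c / u) := by
    intro i
    obtain ⟨c, hc, hμc⟩ := hmrv.exists_tendsto_mul_measureReal_lt hl hbl (.proj i)
    refine ⟨c, hc.congr' ?_, hμc⟩
    filter_upwards [eventually_ge_atTop 1] with t ht
    simp [(hpar i).measureReal_lt t ht, div_eq_mul_inv]
  have hneg : ∀ i, ∀ u > 0, μ {x | u < -x i} = 0 := by
    intro i u hu
    obtain ⟨c, hc, hμc⟩ := hmrv.exists_tendsto_mul_measureReal_lt hl hbl (-.proj i)
    have hzero : ∀ t > 0, P {ω | t < -X ω i} = 0 := fun t ht =>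
      measure_mono_null (t := {ω | ¬ 1 < X ω i})
        (fun ω (hω : t < -X ω i) (h1 : 1 < X ω i) => by linarith) (ae_iff.1 (hpar i).ae_one_lt)
    have hc0 : c = 0 := tendsto_nhds_unique hc <| tendsto_const_nhds.congr' <| by
      filter_upwards [eventually_gt_atTop 0] with t ht
      simp [measureReal_def, hzero t ht]
    simpa [hc0] using hμc u hu
  obtain ⟨c, hc, -⟩ := hcoord i₀
  refine ⟨c, lt_of_not_ge fun hc0 => hmrv.2.1 ?_, hc⟩
  refine Measure.eq_zero_of_measure_lt_abs_eq_zero hmrv.2.2.1 fun i u hu => ?_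
  obtain ⟨ci, hci, hμi⟩ := hcoord i
  have hpos : μ {x | u < x i} = 0 := by
    rw [hμi u hu, tendsto_nhds_unique hci hc, ENNReal.ofReal_eq_zero]
    exact div_nonpos_of_nonpos_of_nonneg hc0 hu.le
  simp only [lt_abs, ofPred_or]
  exact measure_union_null hpos (hneg i u hu)

lemma exists_tendsto_id_mul_measureReal_lt (hmrv : IsMRV P X b μ)
    (hl : SlowlyVarying l) (hbl : ∀ t > 0, b t = l t * t)
    (hpar : ∀ i, IsStdPareto P fun ω => X ω i) (i₀ : Fin d) (L : (Fin d → ℝ) →L[ℝ] ℝ) :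
    ∃ κ, Tendsto (fun t => t * P.real {ω | t < L (X ω)}) atTop (𝓝 κ) := by
  obtain ⟨c, hc0, hc⟩ := hmrv.exists_tendsto_div_self hl hbl hpar i₀
  obtain ⟨cL, hL, -⟩ := hmrv.exists_tendsto_mul_measureReal_lt hl hbl L
  refine ⟨cL / c, (hL.div hc hc0.ne').congr' ?_⟩
  filter_upwards [eventually_gt_atTop 0, hmrv.1.eventually_ne_atTop 0] with t ht hbt
  simp only [Pi.div_apply]
  field_simp

end IsMRV

section WeightedSum

variable {Ω : Type*} [MeasurableSpace Ω] {P : Measure Ω} {d : ℕ} {X : Ω → Fin d → ℝ}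
  {w : Fin d → ℝ} (hpar : ∀ i, IsStdPareto P fun ω => X ω i)
include hpar

lemma aemeasurable_weighted_sum : AEMeasurable (fun ω => ∑ i, w i * X ω i) P :=
  Finset.aemeasurable_fun_sum _ fun i _ => (hpar i).aemeasurable.const_mul (w i)

variable (hw : ∀ i, 0 ≤ w i)
include hw

lemma ae_nonneg_weighted_sum : 0 ≤ᵐ[P] fun ω => ∑ i, w i * X ω i := by
  filter_upwards [ae_all_iff.2 fun i => (hpar i).ae_nonneg] with ω h
  exact Finset.sum_nonneg fun i _ => mul_nonneg (hw i) (h i)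

variable [IsProbabilityMeasure P] (hwsum : ∑ i, w i = 1)
include hwsum

lemma one_add_log_le_integral_min_weighted_sum {T : ℝ} (hT : 1 ≤ T) :
    1 + log T ≤ ∫ ω, min (∑ i, w i * X ω i) T ∂P := by
  have hint := fun i => integrable_min_of_nonneg (hpar i).aemeasurable (hpar i).ae_nonneg
    (zero_le_one.trans hT)
  calc 1 + log T = ∑ i, w i * ∫ ω, min (X ω i) T ∂P := by
        simp [(hpar _).integral_min hT, ← Finset.sum_mul, hwsum]
    _ = ∫ ω, ∑ i, w i * min (X ω i) T ∂P := by
        rw [integral_finsetSum _ fun i _ => (hint i).const_mul (w i)]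
        simp [integral_const_mul]
    _ ≤ ∫ ω, min (∑ i, w i * X ω i) T ∂P :=
        integral_mono (integrable_finsetSum _ fun i _ => (hint i).const_mul (w i))
          (integrable_min_of_nonneg (aemeasurable_weighted_sum hpar)
            (ae_nonneg_weighted_sum hpar hw) (zero_le_one.trans hT))
          fun ω => sum_mul_min_le_min_sum _ (fun i _ => hw i) hwsum _ T

lemma integral_min_weighted_sum_le {T : ℝ} (hT : 1 ≤ T) :
    ∫ ω, min (∑ i, w i * X ω i) T ∂P ≤ ∑ i, w i * (1 - log (w i)) + log T := by
  have hT0 : 0 ≤ T := zero_le_one.trans hT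
  have hint := fun i => integrable_min_of_nonneg ((hpar i).aemeasurable.const_mul (w i))
    ((hpar i).ae_nonneg.mono fun ω h => mul_nonneg (hw i) h) hT0
  have hw1 : ∀ i, w i ≤ 1 := fun i =>
    hwsum ▸ Finset.single_le_sum (fun j _ => hw j) (Finset.mem_univ i)
  calc ∫ ω, min (∑ i, w i * X ω i) T ∂P ≤ ∫ ω, ∑ i, min (w i * X ω i) T ∂P := by
        refine integral_mono_ae (integrable_min_of_nonneg (aemeasurable_weighted_sum hpar)
          (ae_nonneg_weighted_sum hpar hw) hT0) (integrable_finsetSum _ fun i _ => hint i) ?_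
        filter_upwards [ae_all_iff.2 fun i => (hpar i).ae_nonneg] with ω h
        exact min_sum_le_sum_min _ (fun i _ => mul_nonneg (hw i) (h i)) hT0
    _ = ∑ i, w i * (1 + log T - log (w i)) := by
        rw [integral_finsetSum _ fun i _ => hint i]
        exact Finset.sum_congr rfl fun i _ => (hpar i).integral_min_const_mul (hw i) (hw1 i) hT
    _ = ∑ i, w i * (1 - log (w i)) + log T := by
        simp only [sub_eq_add_neg, mul_add, Finset.sum_add_distrib, ← Finset.sum_mul, hwsum]
        ring

lemma tendsto_integral_min_weighted_sum_div_log :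
    Tendsto (fun T => (∫ ω, min (∑ i, w i * X ω i) T ∂P) / log T) atTop (𝓝 1) := by
  refine tendsto_of_tendsto_of_tendsto_of_le_of_le' (tendsto_add_mul_log_div_log 1 1)
    (tendsto_add_mul_log_div_log (∑ i, w i * (1 - log (w i))) 1) ?_ ?_ <;>
  filter_upwards [eventually_gt_atTop 1] with T hT <;>
  refine div_le_div_of_nonneg_right ?_ (log_pos hT).le
  · simpa using one_add_log_le_integral_min_weighted_sum hpar hw hwsum hT.le
  · simpa using integral_min_weighted_sum_le hpar hw hwsum hT.le

lemma eq_one_of_tendsto_mul_measureReal_weighted_sum_lt {κ : ℝ}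
    (hκ : Tendsto (fun t => t * P.real {ω | t < ∑ i, w i * X ω i}) atTop (𝓝 κ)) : κ = 1 := by
  refine tendsto_nhds_unique ?_ (tendsto_integral_min_weighted_sum_div_log hpar hw hwsum)
  refine (tendsto_integral_div_log_of_tendsto_mul
    (fun T => (antitone_measureReal_lt P _).intervalIntegrable) hκ).congr' ?_
  filter_upwards [eventually_ge_atTop 0] with T hT
  rw [integral_min_eq_intervalIntegral (aemeasurable_weighted_sum hpar)
    (ae_nonneg_weighted_sum hpar hw) hT]

end WeightedSum

/-- Corollary `c:PCT`, universality of the Pareto Combination Test: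
if `P_i ∼ Uniform(0,1)`, `X_i = 1/(1-P_i)` and `X ∈ RV_{β=1}(ℝ^d,{b(t)},μ)`, then for every
choice of nonnegative weights summing to one the linear Pareto combination test is
asymptotically calibrated: `P[Σ w_i X_i > t]/P[X_1 > t] → 1`. -/
theorem stmt2 {Ω : Type*} [MeasurableSpace Ω] (P : Measure Ω) [IsProbabilityMeasure P]
    {d : ℕ} (hd : 0 < d) (Pv : Ω → Fin d → ℝ)
    (hunif : ∀ i : Fin d, Measure.map (fun ω => Pv ω i) P
      = volume.restrict (Set.Ioo (0 : ℝ) 1))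
    (X : Ω → Fin d → ℝ) (hXdef : ∀ ω i, X ω i = 1 / (1 - Pv ω i))
    (b : ℝ → ℝ) (μ : Measure (Fin d → ℝ))
    (hX : IsMRVIdx P X 1 b μ)
    (w : Fin d → ℝ) (hw : ∀ i, 0 ≤ w i) (hwsum : ∑ i, w i = 1) :
    Tendsto (fun t : ℝ =>
        (P {ω | t < ∑ i, w i * X ω i}).toReal / (P {ω | t < X ω ⟨0, hd⟩}).toReal)
      atTop (nhds 1) := by
  obtain ⟨hmrv, -, l, hl, hbl⟩ := hX
  simp only [rpow_one] at hbl
  have hpar : ∀ i, IsStdPareto P fun ω => X ω i := fun i => by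
    simpa only [hXdef] using isStdPareto_one_div_one_sub (hunif i)
  obtain ⟨κ, hκ⟩ := hmrv.exists_tendsto_id_mul_measureReal_lt hl hbl hpar ⟨0, hd⟩
    (∑ i, w i • ContinuousLinearMap.proj i)
  simp only [FunLike.coe_sum, Finset.sum_apply, FunLike.coe_smul, Pi.smul_apply,
    ContinuousLinearMap.proj_apply, smul_eq_mul] at hκ
  rw [eq_one_of_tendsto_mul_measureReal_weighted_sum_lt hpar hw hwsum hκ] at hκ
  refine hκ.congr' ?_
  filter_upwards [eventually_ge_atTop 1] with t ht
  rw [← measureReal_def, ← measureReal_def, (hpar _).measureReal_lt t ht, div_inv_eq_mul, mul_comm]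
end
end

section
/- Let Δ = {(x_i)_{i=1}^d : x_i ≥ 0, Σ_{i=1}^d x_i = 1} be the unit simplex and let h : [0, ∞)^d → [0, ∞) be a continuous 1-homogeneous function. Then ∫_Δ h(θ) σ(dθ) = 1/d for every Borel probability measure σ on Δ satisfying ∫_Δ θ_i σ(dθ) = 1/d for all i = 1, …, d, if and only if there exist w_1, …, w_d ≥ 0 with Σ_{i=1}^d w_i = 1 such that h(x) = Σ_{i=1}^d w_i x_i for all x ∈ [0, ∞)^d. (This characterizes the linear Pareto-type combination tests as the unique universally calibrated homogeneous combination tests.) -/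
open MeasureTheory Filter Topology

noncomputable section

/-!
Testing against a measure supported on finitely many points of the simplex turns calibration
into linear identities. The uniform measure on the vertices `eᵢ` gives `∑ᵢ h(eᵢ) = 1`. For a
point `θ` of the simplex, the measure with mass `1/d` at `θ` and mass `(1 - θᵢ)/d` at `eᵢ` has
all marginal means `1/d`, and calibration then forces `h θ = ∑ᵢ h(eᵢ) θᵢ`. Homogeneity extends
this identity from the simplex to the whole orthant.
-/

namespace MeasureTheory.Measure

variable {κ α : Type*} [Fintype κ] [MeasurableSpace α]

def atomicMeasure (c : κ → ℝ) (a : κ → α) : Measure α :=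
  ∑ k, ENNReal.ofReal (c k) • dirac (a k)

variable {c : κ → ℝ} {a : κ → α}

lemma isProbabilityMeasure_atomicMeasure (hc : ∀ k, 0 ≤ c k) (hsum : ∑ k, c k = 1) :
    IsProbabilityMeasure (atomicMeasure c a) := by
  constructor
  simp only [atomicMeasure, finsetSum_apply, smul_apply, measure_univ, smul_eq_mul, mul_one]
  rw [← ENNReal.ofReal_sum_of_nonneg fun k _ => hc k, hsum, ENNReal.ofReal_one]

lemma ae_atomicMeasure [MeasurableSingletonClass α] {P : α → Prop} (hP : ∀ k, P (a k)) :
    ∀ᵐ x ∂atomicMeasure c a, P x := by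
  rw [ae_iff, atomicMeasure, finsetSum_apply]
  refine Finset.sum_eq_zero fun k _ => ?_
  simp [dirac_apply, hP k]

lemma integral_atomicMeasure [MeasurableSingletonClass α] (hc : ∀ k, 0 ≤ c k) (f : α → ℝ) :
    ∫ x, f x ∂atomicMeasure c a = ∑ k, c k * f (a k) := by
  rw [atomicMeasure, integral_finsetSum_measure fun k _ =>
    (integrable_dirac enorm_lt_top).smul_measure ENNReal.ofReal_ne_top]
  simp [integral_smul_measure, ENNReal.toReal_ofReal (hc _)]

end MeasureTheory.Measure

open MeasureTheory.Measure

variable {ι : Type*} [Fintype ι]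

/-- Universal calibration of `h`, in the angular form given by the polar decomposition. -/
def IsCalibrated (h : (ι → ℝ) → ℝ) : Prop :=
  ∀ σ : Measure (ι → ℝ), IsProbabilityMeasure σ →
    (∀ᵐ θ ∂σ, θ ∈ stdSimplex ℝ ι) →
    (∀ i, ∫ θ, θ i ∂σ = 1 / Fintype.card ι) →
    ∫ θ, h θ ∂σ = 1 / Fintype.card ι

namespace IsCalibrated

variable {h : (ι → ℝ) → ℝ}

lemma sum_mul_eq_of_barycenter (H : IsCalibrated h) {κ : Type*} [Fintype κ] {c : κ → ℝ}
    {a : κ → ι → ℝ} (hc : ∀ k, 0 ≤ c k) (hsum : ∑ k, c k = 1)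
    (ha : ∀ k, a k ∈ stdSimplex ℝ ι) (hbar : ∀ i, ∑ k, c k * a k i = 1 / Fintype.card ι) :
    ∑ k, c k * h (a k) = 1 / Fintype.card ι := by
  have := H (atomicMeasure c a) (isProbabilityMeasure_atomicMeasure hc hsum)
    (ae_atomicMeasure ha) fun i => by rw [integral_atomicMeasure hc, hbar]
  rwa [integral_atomicMeasure hc] at this

variable [DecidableEq ι] [Nonempty ι]

lemma sum_apply_single (H : IsCalibrated h) : ∑ i, h (Pi.single i 1) = 1 := by
  have hn : (Fintype.card ι : ℝ) ≠ 0 := Nat.cast_ne_zero.2 Fintype.card_ne_zero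
  have hc : ∀ _ : ι, (0 : ℝ) ≤ 1 / Fintype.card ι := fun _ => by positivity
  have key := H.sum_mul_eq_of_barycenter hc (by simp [hn]) (fun i => single_mem_stdSimplex ℝ i)
    fun i => by simp [Pi.single_apply]
  rw [← Finset.mul_sum] at key
  field_simp at key
  exact key

lemma eq_sum_mul_of_mem_stdSimplex (H : IsCalibrated h) {θ : ι → ℝ}
    (hθ : θ ∈ stdSimplex ℝ ι) : h θ = ∑ i, h (Pi.single i 1) * θ i := by
  set n : ℝ := (Fintype.card ι : ℝ)
  have hn : 0 < n := Nat.cast_pos.2 Fintype.card_pos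
  set c : Option ι → ℝ := fun o => o.elim (1 / n) fun i => (1 - θ i) / n
  set a : Option ι → ι → ℝ := fun o => o.elim θ fun i => Pi.single i 1
  have hc : ∀ o, 0 ≤ c o := by
    rintro (_ | i)
    · exact div_nonneg zero_le_one hn.le
    · exact div_nonneg (sub_nonneg.2 (mem_Icc_of_mem_stdSimplex hθ i).2) hn.le
  have hsum : ∑ o, c o = 1 := by
    simp only [c, Fintype.sum_option, Option.elim, ← Finset.sum_div, Finset.sum_sub_distrib,
      hθ.2, Finset.sum_const, Finset.card_univ, nsmul_eq_mul, mul_one]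
    field_simp
    ring
  have key := H.sum_mul_eq_of_barycenter (a := a) hc hsum
    (by rintro (_ | i); exacts [hθ, single_mem_stdSimplex ℝ i])
    fun i => by
      simp only [c, a, Fintype.sum_option, Option.elim, Pi.single_apply]
      simp only [one_div, mul_ite, mul_one, mul_zero, Finset.sum_ite_eq, Finset.mem_univ,
        if_true]
      field_simp
      ring
  simp only [c, a, Fintype.sum_option, Option.elim] at key
  change 1 / n * h θ + _ = 1 / n at key
  have hsplit : ∑ i, (1 - θ i) / n * h (Pi.single i 1)
      = (∑ i, h (Pi.single i 1) - ∑ i, h (Pi.single i 1) * θ i) / n := by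
    rw [← Finset.sum_sub_distrib, Finset.sum_div]
    exact Finset.sum_congr rfl fun i _ => by ring
  rw [hsplit, H.sum_apply_single] at key
  field_simp at key
  linarith

end IsCalibrated

lemma eq_sum_mul_of_eqOn_stdSimplex {h : (ι → ℝ) → ℝ} {w : ι → ℝ}
    (hhom : ∀ lam : ℝ, 0 < lam → ∀ x : ι → ℝ, (∀ i, 0 ≤ x i) → h (lam • x) = lam * h x)
    (hΔ : ∀ θ ∈ stdSimplex ℝ ι, h θ = ∑ i, w i * θ i) {x : ι → ℝ} (hx : ∀ i, 0 ≤ x i) :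
    h x = ∑ i, w i * x i := by
  set s := ∑ i, x i
  obtain hs | hs := (Finset.sum_nonneg fun i _ => hx i : 0 ≤ s).eq_or_lt
  · obtain rfl : x = 0 := funext fun i =>
      (Finset.sum_eq_zero_iff_of_nonneg fun i _ => hx i).1 hs.symm i (Finset.mem_univ i)
    have h0 := hhom 2 two_pos 0 fun _ => le_rfl
    rw [smul_zero] at h0
    simp only [Pi.zero_apply, mul_zero, Finset.sum_const_zero]
    linarith
  · have hθ : s⁻¹ • x ∈ stdSimplex ℝ ι :=
      ⟨fun i => mul_nonneg (inv_nonneg.2 hs.le) (hx i), by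
        simp only [Pi.smul_apply, smul_eq_mul, ← Finset.mul_sum, inv_mul_cancel₀ hs.ne', s]⟩
    calc h x = h (s • s⁻¹ • x) := by rw [smul_smul, mul_inv_cancel₀ hs.ne', one_smul]
      _ = s * ∑ i, w i * (s⁻¹ • x) i := by rw [hhom s hs _ hθ.1, hΔ _ hθ]
      _ = ∑ i, w i * x i := by
        simp only [Pi.smul_apply, smul_eq_mul, Finset.mul_sum]
        exact Finset.sum_congr rfl fun i _ => by rw [mul_left_comm, mul_inv_cancel_left₀ hs.ne']

lemma isCalibrated_of_eqOn_stdSimplex {h : (ι → ℝ) → ℝ} {w : ι → ℝ} (hw : ∑ i, w i = 1)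
    (hΔ : ∀ θ ∈ stdSimplex ℝ ι, h θ = ∑ i, w i * θ i) : IsCalibrated h := by
  intro σ _ hσ hmean
  have hint : ∀ i, Integrable (fun θ : ι → ℝ => θ i) σ := fun i =>
    .of_bound (continuous_apply i).aestronglyMeasurable 1 <| hσ.mono fun θ hθ => by
      rw [Real.norm_eq_abs, abs_of_nonneg (hθ.1 i)]
      exact (mem_Icc_of_mem_stdSimplex hθ i).2
  calc ∫ θ, h θ ∂σ = ∫ θ, ∑ i, w i * θ i ∂σ := integral_congr_ae (hσ.mono hΔ)
    _ = ∑ i, w i * (1 / Fintype.card ι) := by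
      rw [integral_finsetSum _ fun i _ => (hint i).const_mul (w i)]
      simp only [integral_const_mul, hmean]
    _ = 1 / Fintype.card ι := by rw [← Finset.sum_mul, hw, one_mul]

theorem stmt8_general {d : ℕ} (hd : 0 < d) (h : (Fin d → ℝ) → ℝ)
    (hnonneg : ∀ x, (∀ i, 0 ≤ x i) → 0 ≤ h x)
    (hhom : ∀ lam : ℝ, 0 < lam → ∀ x : Fin d → ℝ, (∀ i, 0 ≤ x i) →
      h (lam • x) = lam * h x) :
    ((∀ σ : Measure (Fin d → ℝ), IsProbabilityMeasure σ →
        (∀ᵐ θ ∂σ, (∀ i, 0 ≤ θ i) ∧ ∑ i, θ i = 1) →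
        (∀ i : Fin d, ∫ θ, θ i ∂σ = 1 / d) →
        ∫ θ, h θ ∂σ = 1 / d)
      ↔ ∃ w : Fin d → ℝ, (∀ i, 0 ≤ w i) ∧ ∑ i, w i = 1 ∧
          ∀ x : Fin d → ℝ, (∀ i, 0 ≤ x i) → h x = ∑ i, w i * x i) := by
  have : Nonempty (Fin d) := ⟨⟨0, hd⟩⟩
  have hcard : (Fintype.card (Fin d) : ℝ) = d := by rw [Fintype.card_fin]
  constructor
  · intro H
    replace H : IsCalibrated h := by rwa [IsCalibrated, hcard]
    exact ⟨fun i => h (Pi.single i 1), fun i => hnonneg _ (single_mem_stdSimplex ℝ i).1,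
      H.sum_apply_single, fun x hx =>
        eq_sum_mul_of_eqOn_stdSimplex hhom (fun θ hθ => H.eq_sum_mul_of_mem_stdSimplex hθ) hx⟩
  · rintro ⟨w, -, hw, hlin⟩
    have H := isCalibrated_of_eqOn_stdSimplex hw fun θ hθ => hlin θ hθ.1
    rwa [IsCalibrated, hcard] at H

/-- Theorem `t:unique_univ_calibrated`: a continuous 1-homogeneous
`h : [0,∞)^d → [0,∞)` satisfies `∫_Δ h dσ = 1/d` for every Borel probability measure `σ`
on the unit simplex `Δ` with `∫_Δ θ_i dσ = 1/d` for all `i`, if and only if `h` is a convex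
combination `h(x) = Σ w_i x_i` with `w_i ≥ 0`, `Σ w_i = 1`.  In other words, the linear
Pareto-type combination tests are the unique universally calibrated homogeneous tests. -/
theorem stmt8 {d : ℕ} (hd : 0 < d) (h : (Fin d → ℝ) → ℝ)
    (hcont : ContinuousOn h {x | ∀ i, 0 ≤ x i})
    (hnonneg : ∀ x, (∀ i, 0 ≤ x i) → 0 ≤ h x)
    (hhom : ∀ lam : ℝ, 0 < lam → ∀ x : Fin d → ℝ, (∀ i, 0 ≤ x i) →
      h (lam • x) = lam * h x) :
    ((∀ σ : Measure (Fin d → ℝ), IsProbabilityMeasure σ →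
        (∀ᵐ θ ∂σ, (∀ i, 0 ≤ θ i) ∧ ∑ i, θ i = 1) →
        (∀ i : Fin d, ∫ θ, θ i ∂σ = 1 / d) →
        ∫ θ, h θ ∂σ = 1 / d)
      ↔ ∃ w : Fin d → ℝ, (∀ i, 0 ≤ w i) ∧ ∑ i, w i = 1 ∧
          ∀ x : Fin d → ℝ, (∀ i, 0 ≤ x i) → h x = ∑ i, w i * x i) :=
  stmt8_general hd h hnonneg hhom
end
end

section
/- Let (S, 𝒮) be a measurable space, let 𝒢 = {g_1, …, g_d} be bounded nonnegative measurable functions on S, let c > 0, and define ℳ_c(𝒢) := {finite positive measures φ on (S, 𝒮) : ∫_S g_i dφ = c for all i = 1, …, d}. Suppose there exist points x_1, …, x_d ∈ S such that the matrix G := (g_i(x_j))_{d×d} is nonsingular and the all-ones vector 𝟏 ∈ ℝ^d lies in the interior of the cone G(ℝ₊^d) = {Gz : z ∈ ℝ₊^d}. Then: (i) if h : S → ℝ₊ is a bounded nonnegative measurable function with ∫_S h dφ = c for all φ ∈ ℳ_c(𝒢), there exist λ_1, …, λ_d ∈ ℝ with Σ_{i=1}^d λ_i = 1 such that h(x) =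 Σ_{i=1}^d λ_i g_i(x) for all x ∈ S; and (ii) if moreover 𝒢 satisfies the anti-dominance condition, then λ_i ≥ 0 for all i. -/
/-!
Testing the integral constraint on the finitely supported measures `c • Σ_k w_k δ_{q_k}` turns it
into: whenever `Σ_k w_k g_i(q_k) = 1` for all `i` (with `w ≥ 0`), also `Σ_k w_k h(q_k) = 1`.
Since `G` is invertible there is a unique `λ` with `Σ_i λ_i g_i(x_j) = h(x_j)` for all `j`.
Weights `z ≥ 0` with `G z = 𝟏` then give `Σ_i λ_i = 1`. For an arbitrary `x`, the interior
assumption yields `t > 0` and `z ≥ 0` with `G z = 𝟏 - t (g_i(x))_i`; the configuration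
`Σ_j z_j δ_{x_j} + t δ_x` then gives `t h(x) = t Σ_i λ_i g_i(x)`.
If some `λ_i` were negative, `h ≥ 0` would say that the family indexed by the negative
coefficients is dominated by the others, contradicting anti-dominance.
-/

open MeasureTheory Filter Topology

noncomputable section

/-- The anti-dominance condition for a finite family `g_1, …, g_d` of functions on `S`:
for every nonempty proper subset `ℐ ⊊ {1,…,d}` and all nonnegative coefficients `λ` with
`Σ_{i∈ℐ} λ_i > 0`, the pointwise domination `Σ_{i∈ℐ} λ_i g_i ≤ Σ_{j∈ℐᶜ} λ_j g_j` fails. -/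
def AntiDominance {S : Type*} {d : ℕ} (g : Fin d → S → ℝ) : Prop :=
  ∀ I : Finset (Fin d), I.Nonempty → I ≠ Finset.univ →
    ∀ lam : Fin d → ℝ, (∀ i, 0 ≤ lam i) → 0 < ∑ i ∈ I, lam i →
      ∃ x : S, ∑ j ∈ Iᶜ, lam j * g j x < ∑ i ∈ I, lam i * g i x

section Atomic

variable {S : Type*} [MeasurableSpace S]

theorem integral_sum_toNNReal_smul_dirac {ι : Type*} [Fintype ι] (q : ι → S) {w : ι → ℝ}
    (hw : ∀ k, 0 ≤ w k) {f : S → ℝ} (hf : Measurable f) :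
    ∫ x, f x ∂(∑ k, (w k).toNNReal • Measure.dirac (q k)) = ∑ k, f (q k) * w k := by
  rw [integral_finsetSum_measure fun k _ =>
    (integrable_dirac' hf.stronglyMeasurable enorm_lt_top).smul_measure_nnreal]
  refine Finset.sum_congr rfl fun k _ => ?_
  rw [integral_smul_nnreal_measure, integral_dirac' f _ hf.stronglyMeasurable,
    NNReal.smul_def, Real.coe_toNNReal _ (hw k), smul_eq_mul, mul_comm]

theorem sum_mul_eq_one_of_integral_eq {κ : Type*} {g : κ → S → ℝ} {h : S → ℝ} {c : ℝ}
    (hg : ∀ i, Measurable (g i)) (hh : Measurable h) (hc : 0 < c)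
    (hint : ∀ φ : Measure S, IsFiniteMeasure φ →
      (∀ i, ∫ x, g i x ∂φ = c) → ∫ x, h x ∂φ = c)
    {ι : Type*} [Fintype ι] (q : ι → S) (w : ι → ℝ) (hw : ∀ k, 0 ≤ w k)
    (hgw : ∀ i, ∑ k, g i (q k) * w k = 1) :
    ∑ k, h (q k) * w k = 1 := by
  have hcw : ∀ k, 0 ≤ c * w k := fun k => mul_nonneg hc.le (hw k)
  have hφ : ∀ {f : S → ℝ}, Measurable f →
      ∫ x, f x ∂(∑ k, (c * w k).toNNReal • Measure.dirac (q k)) = c * ∑ k, f (q k) * w k :=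
    fun hf => by
      rw [integral_sum_toNNReal_smul_dirac q hcw hf, Finset.mul_sum]
      exact Finset.sum_congr rfl fun k _ => by ring
  have := hint _ inferInstance fun i => by rw [hφ (hg i), hgw i, mul_one]
  rw [hφ hh] at this
  exact mul_left_cancel₀ hc.ne' (this.trans (mul_one c).symm)

end Atomic

universe u

theorem exists_pos_sub_smul_mem_of_mem_interior {E : Type*} [AddCommGroup E] [Module ℝ E]
    [TopologicalSpace E] [IsTopologicalAddGroup E] [ContinuousSMul ℝ E] {C : Set E} {y : E}
    (hy : y ∈ interior C) (v : E) : ∃ t : ℝ, 0 < t ∧ y - t • v ∈ C := by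
  have hcont : Tendsto (fun t : ℝ => y - t • v) (𝓝[>] 0) (𝓝 y) := by
    have : Continuous fun t : ℝ => y - t • v := by fun_prop
    simpa using (this.tendsto 0).mono_left nhdsWithin_le_nhds
  obtain ⟨t, hmem, ht⟩ :=
    ((hcont.eventually_mem (mem_interior_iff_mem_nhds.mp hy)).and self_mem_nhdsWithin).exists
  exact ⟨t, ht, hmem⟩

open Matrix in
theorem exists_sum_eq_one_and_eq_sum_mul {S : Type*} {n : Type u} [Fintype n] [DecidableEq n]
    {g : n → S → ℝ} {h : S → ℝ} {pts : n → S}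
    (hGdet : (Matrix.of fun i j => g i (pts j)).det ≠ 0)
    (hGcone : (fun _ => (1 : ℝ)) ∈ interior
      {y : n → ℝ | ∃ z : n → ℝ, (∀ i, 0 ≤ z i) ∧ y = (Matrix.of fun i j => g i (pts j)).mulVec z})
    (hatoms : ∀ {ι : Type u} [Fintype ι] (q : ι → S) (w : ι → ℝ), (∀ k, 0 ≤ w k) →
      (∀ i, ∑ k, g i (q k) * w k = 1) → ∑ k, h (q k) * w k = 1) :
    ∃ lam : n → ℝ, ∑ i, lam i = 1 ∧ ∀ x, h x = ∑ i, lam i * g i x := by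
  set G : Matrix n n ℝ := of fun i j => g i (pts j)
  rw [← Pi.one_def] at hGcone
  set lam := (h ∘ pts) ᵥ* G⁻¹
  have hlam : ∀ z, (h ∘ pts) ⬝ᵥ z = lam ⬝ᵥ (G *ᵥ z) := fun z => by
    rw [dotProduct_mulVec, vecMul_vecMul, nonsing_inv_mul _ (isUnit_iff_ne_zero.2 hGdet),
      vecMul_one]
  obtain ⟨z₀, hz₀, hGz₀⟩ := interior_subset hGcone
  have hsum : ∑ i, lam i = 1 := by
    rw [← dotProduct_one, hGz₀, ← hlam]
    exact hatoms pts z₀ hz₀ fun i => (congrFun hGz₀ i).symm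
  refine ⟨lam, hsum, fun x => ?_⟩
  obtain ⟨t, ht, z, hz, hGz⟩ := exists_pos_sub_smul_mem_of_mem_interior hGcone fun i => g i x
  have hatom : h x * t + (h ∘ pts) ⬝ᵥ z = 1 := by
    have := hatoms (fun o : Option n => o.elim x pts) (fun o => o.elim t z)
      (by rintro (_ | k) <;> simp [ht.le, hz])
      fun i => by
        simp only [Fintype.sum_option, Option.elim]
        linarith [show 1 - t * g i x = ∑ j, g i (pts j) * z j from congrFun hGz i]
    simp only [Fintype.sum_option, Option.elim] at this
    exact this
  have hz_eval : (h ∘ pts) ⬝ᵥ z = 1 - t * ∑ i, lam i * g i x := by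
    rw [hlam, ← hGz, dotProduct_sub, dotProduct_smul, dotProduct_one, hsum]; rfl
  exact mul_right_cancel₀ ht.ne' (by linarith)

theorem AntiDominance.nonneg_of_sum_nonneg {S : Type*} {d : ℕ} {g : Fin d → S → ℝ}
    (hAD : AntiDominance g) {lam : Fin d → ℝ} (hsum : 0 ≤ ∑ i, lam i)
    (hpos : ∀ x, 0 ≤ ∑ i, lam i * g i x) (i : Fin d) : 0 ≤ lam i := by
  by_contra! hi
  set I := Finset.univ.filter fun j => lam j < 0
  have hI : I.Nonempty := ⟨i, by simpa [I] using hi⟩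
  have hIu : I ≠ Finset.univ := fun hIu => by
    have := Finset.sum_neg (fun j hj => Finset.filter_eq_self.1 hIu j hj) ⟨i, Finset.mem_univ i⟩
    linarith
  obtain ⟨x, hx⟩ := hAD I hI hIu (fun j => |lam j|) (fun j => abs_nonneg _)
    (Finset.sum_pos (fun j hj => abs_pos.2 (Finset.mem_filter.1 hj).2.ne) hI)
  have hIc : ∑ j ∈ Iᶜ, |lam j| * g j x = ∑ j ∈ Iᶜ, lam j * g j x :=
    Finset.sum_congr rfl fun j hj => by
      rw [abs_of_nonneg (by simpa [I] using hj)]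
  have hI' : ∑ j ∈ I, |lam j| * g j x = -∑ j ∈ I, lam j * g j x := by
    rw [← Finset.sum_neg_distrib]
    exact Finset.sum_congr rfl fun j hj => by
      rw [abs_of_neg (Finset.mem_filter.1 hj).2, neg_mul]
  linarith [hpos x, Finset.sum_add_sum_compl I fun j => lam j * g j x]

theorem stmt19_general {S : Type*} [MeasurableSpace S] {d : ℕ} (g : Fin d → S → ℝ)
    (hgmeas : ∀ i, Measurable (g i))
    (c : ℝ) (hc : 0 < c)
    (pts : Fin d → S)
    (hGdet : (Matrix.of fun i j : Fin d => g i (pts j)).det ≠ 0)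
    (hGcone : (fun _ : Fin d => (1 : ℝ)) ∈ interior
      {y : Fin d → ℝ | ∃ z : Fin d → ℝ, (∀ i, 0 ≤ z i) ∧
        y = (Matrix.of fun i j : Fin d => g i (pts j)).mulVec z})
    (h : S → ℝ) (hhmeas : Measurable h) (hhnonneg : ∀ x, 0 ≤ h x)
    (hint : ∀ φ : Measure S, IsFiniteMeasure φ →
      (∀ i, ∫ x, g i x ∂φ = c) → ∫ x, h x ∂φ = c) :
    ∃ lam : Fin d → ℝ, ∑ i, lam i = 1 ∧
      (∀ x : S, h x = ∑ i, lam i * g i x) ∧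
      (AntiDominance g → ∀ i, 0 ≤ lam i) := by
  obtain ⟨lam, hsum, hlam⟩ := exists_sum_eq_one_and_eq_sum_mul hGdet hGcone
    fun q w hw hgw => sum_mul_eq_one_of_integral_eq hgmeas hhmeas hc hint q w hw hgw
  exact ⟨lam, hsum, hlam, fun hAD =>
    hAD.nonneg_of_sum_nonneg (hsum ▸ zero_le_one) fun x => hlam x ▸ hhnonneg x⟩

/-- Theorem `t:characterization`: let `g_1,…,g_d` be bounded nonnegative
measurable functions on `S`, `c > 0`, and suppose there are points `x_1,…,x_d` making the
matrix `G = (g_i(x_j))` nonsingular with the all-ones vector in the interior of the cone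
`G(ℝ₊^d)`.  (i) If a bounded nonnegative measurable `h` satisfies `∫ h dφ = c` for every
finite positive measure `φ` with `∫ g_i dφ = c` for all `i`, then `h = Σ λ_i g_i` with
`Σ λ_i = 1`; and (ii) if moreover `𝒢` satisfies the anti-dominance condition, then the
`λ_i` are nonnegative. -/
theorem stmt19 {S : Type*} [MeasurableSpace S] {d : ℕ} (g : Fin d → S → ℝ)
    (hgmeas : ∀ i, Measurable (g i))
    (hgnonneg : ∀ i x, 0 ≤ g i x)
    (hgbdd : ∀ i, ∃ C : ℝ, ∀ x, g i x ≤ C)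
    (c : ℝ) (hc : 0 < c)
    (pts : Fin d → S)
    (hGdet : (Matrix.of fun i j : Fin d => g i (pts j)).det ≠ 0)
    (hGcone : (fun _ : Fin d => (1 : ℝ)) ∈ interior
      {y : Fin d → ℝ | ∃ z : Fin d → ℝ, (∀ i, 0 ≤ z i) ∧
        y = (Matrix.of fun i j : Fin d => g i (pts j)).mulVec z})
    (h : S → ℝ) (hhmeas : Measurable h) (hhnonneg : ∀ x, 0 ≤ h x)
    (hhbdd : ∃ C : ℝ, ∀ x, h x ≤ C)
    (hint : ∀ φ : Measure S, IsFiniteMeasure φ →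
      (∀ i, ∫ x, g i x ∂φ = c) → ∫ x, h x ∂φ = c) :
    ∃ lam : Fin d → ℝ, ∑ i, lam i = 1 ∧
      (∀ x : S, h x = ∑ i, lam i * g i x) ∧
      (AntiDominance g → ∀ i, 0 ≤ lam i) :=
  stmt19_general g hgmeas c hc pts hGdet hGcone h hhmeas hhnonneg hint
end
end
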